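/- arXiv:1807.03276 — 5 statements merged into one kernel-verified Lean document; each statement's English description precedes it below -/
import Mathlib

section
/- (Correspondence principle) Let n ≥ 2, θ, λ ∈ ℝ, and let u be a twice continuously differentiable function on 𝔹. Then on 𝔹 one has the identity L_θ[M^λ[u]] = M^λ[L_{θ-λ}[u]] + 4λ(λ-1-2θ) M^{λ-1}[u]. -/
open MeasureTheory
open scoped BigOperators ENNReal Classical

noncomputable section

/-- Euclidean space `ℝⁿ`. -/
abbrev E (n : ℕ) := EuclideanSpace ℝ (Fin n)

/-- The open unit ball of `ℝⁿ`. -/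
def unitBall (n : ℕ) : Set (E n) := Metric.ball 0 1

/-- The Laplacian `Δf = ∑ ∂²f/∂xᵢ²`. -/
def lap {n : ℕ} (f : E n → ℂ) (x : E n) : ℂ :=
  ∑ i : Fin n,
    fderiv ℝ (fun y => fderiv ℝ f y (EuclideanSpace.single i 1)) x (EuclideanSpace.single i 1)

/-- The `N`-th iterate `Δ^N` of the Laplacian. -/
def lapIter {n : ℕ} (N : ℕ) (f : E n → ℂ) : E n → ℂ := lap^[N] f

/-- The radial derivative `R[u](x) = x ⋅ ∇u(x)`. -/
def radialDeriv {n : ℕ} (f : E n → ℂ) (x : E n) : ℂ := fderiv ℝ f x x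

/-- The operator `L_θ[u] = (1-|x|²) Δu + 4θ R[u] + 2θ(n-2-2θ) u`. -/
def Lop {n : ℕ} (θ : ℝ) (f : E n → ℂ) (x : E n) : ℂ :=
  ((1 - ‖x‖ ^ 2 : ℝ) : ℂ) * lap f x + ((4 * θ : ℝ) : ℂ) * radialDeriv f x
    + ((2 * θ * ((n : ℝ) - 2 - 2 * θ) : ℝ) : ℂ) * f x

/-- The multiplication operator `M^j[u](x) = (1-|x|²)^j u(x)` for integer `j`. -/
def Mnat {n : ℕ} (j : ℕ) (f : E n → ℂ) (x : E n) : ℂ :=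
  (((1 - ‖x‖ ^ 2) ^ j : ℝ) : ℂ) * f x

/-- The multiplication operator `M^λ[u](x) = (1-|x|²)^λ u(x)` for real `λ`. -/
def Mr {n : ℕ} (lam : ℝ) (f : E n → ℂ) (x : E n) : ℂ :=
  (((1 - ‖x‖ ^ 2) ^ lam : ℝ) : ℂ) * f x

/-- `u` is `N`-harmonic on the unit ball: `u` is `C^{2N}` there and `Δ^N u = 0`. -/
def NHarm (n N : ℕ) (u : E n → ℂ) : Prop :=
  ContDiffOn ℝ (2 * N : ℕ) u (unitBall n) ∧ ∀ x ∈ unitBall n, lapIter N u x = 0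

/-- `‖u‖_{p,α}^p = ∫_𝔹 |u|^p (1-|x|²)^α dV`, as a lower integral. -/
def wInt (n : ℕ) (p α : ℝ) (u : E n → ℂ) : ℝ≥0∞ :=
  ∫⁻ x in unitBall n, ENNReal.ofReal (‖u x‖ ^ p * (1 - ‖x‖ ^ 2) ^ α)

/-- Membership in `PH^p_{N,α}(𝔹)`. -/
def memPH (n N : ℕ) (p α : ℝ) (u : E n → ℂ) : Prop :=
  NHarm n N u ∧ wInt n p α u < ⊤

/-- The quantities `b_{j,N}(p)`. -/
def bCoef (n N j : ℕ) (p : ℝ) : ℝ :=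
  if j = 0 then -1 - ((N : ℝ) - 1) * p
  else max (-1 - ((N : ℝ) + (j : ℝ) - 1) * p) (-(n : ℝ) - ((N : ℝ) - (j : ℝ) - (n : ℝ) + 1) * p)

/-- The quantities `a_{j,N}(p)`. -/
def aCoef (n N j : ℕ) (p : ℝ) : ℝ :=
  min (bCoef n N j p) (-1 - ((N : ℝ) - (j : ℝ)) * p)

end

/-! Write `w = (1 - ‖x‖²)^λ`. The Leibniz rule `Δ(w u) = w Δu + 2 ∇w·∇u + (Δw) u` together with
`∇w = -2λ (1 - ‖x‖²)^(λ-1) x` turns the cross term into `-4λ (1 - ‖x‖²)^(λ-1) R[u]`; multiplied by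
`1 - ‖x‖²` this is what shifts `θ` to `θ - λ`. All remaining terms are `(1 - ‖x‖²)^(λ-2) u` times
polynomials in `‖x‖²`, so the identity reduces to a polynomial one. -/

open Topology

section SecondDerivative

variable {F G : Type*} [NormedAddCommGroup F] [NormedSpace ℝ F]
  [NormedAddCommGroup G] [NormedSpace ℝ G]

noncomputable def dirDeriv2 (f : F → G) (x v : F) : G :=
  fderiv ℝ (fun y => fderiv ℝ f y v) x v

lemma ContDiffAt.eventually_differentiableAt {f : F → G} {x : F} (hf : ContDiffAt ℝ 2 f x) :
    ∀ᶠ y in 𝓝 x, DifferentiableAt ℝ f y :=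
  (hf.eventually (by simp)).mono fun _ hy => hy.differentiableAt (by norm_num)

lemma ContDiffAt.differentiableAt_fderiv_apply {f : F → G} {x : F} (hf : ContDiffAt ℝ 2 f x)
    (v : F) : DifferentiableAt ℝ (fun y => fderiv ℝ f y v) x :=
  ((hf.fderiv_right (m := 1) (by norm_num)).differentiableAt (by norm_num)).clm_apply
    (differentiableAt_const v)

lemma dirDeriv2_smul {f : F → ℝ} {g : F → G} {x : F} (hf : ContDiffAt ℝ 2 f x)
    (hg : ContDiffAt ℝ 2 g x) (v : F) :
    dirDeriv2 (fun y => f y • g y) x v =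
      f x • dirDeriv2 g x v + (2 * fderiv ℝ f x v) • fderiv ℝ g x v + dirDeriv2 f x v • g x := by
  have hderiv : (fun y => fderiv ℝ (fun y => f y • g y) y v) =ᶠ[𝓝 x]
      fun y => f y • fderiv ℝ g y v + fderiv ℝ f y v • g y := by
    filter_upwards [hf.eventually_differentiableAt, hg.eventually_differentiableAt]
      with y hfy hgy
    simp [fderiv_fun_smul hfy hgy]
  have hf1 := (hf.differentiableAt (by norm_num)).hasFDerivAt
  have hg1 := (hg.differentiableAt (by norm_num)).hasFDerivAt
  have hf2 := (hf.differentiableAt_fderiv_apply v).hasFDerivAt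
  have hg2 := (hg.differentiableAt_fderiv_apply v).hasFDerivAt
  unfold dirDeriv2
  rw [hderiv.fderiv_eq, ((hf1.fun_smul hg2).fun_add (hf2.fun_smul hg1)).fderiv]
  simp only [add_apply, smul_apply, ContinuousLinearMap.smulRight_apply]
  module

end SecondDerivative

section BallWeight

variable {F : Type*} [NormedAddCommGroup F] {x : F}

noncomputable def ballWeight (μ : ℝ) (y : F) : ℝ := (1 - ‖y‖ ^ 2) ^ μ

lemma one_sub_norm_sq_pos (hx : ‖x‖ < 1) : 0 < 1 - ‖x‖ ^ 2 := by
  nlinarith [norm_nonneg x]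

lemma ballWeight_eq_mul (μ : ℝ) (hx : ‖x‖ < 1) :
    ballWeight μ x = ballWeight (μ - 1) x * (1 - ‖x‖ ^ 2) := by
  rw [ballWeight, ballWeight, ← Real.rpow_add_one (one_sub_norm_sq_pos hx).ne', sub_add_cancel]

variable [InnerProductSpace ℝ F]

lemma hasFDerivAt_one_sub_norm_sq (x : F) :
    HasFDerivAt (fun y : F => 1 - ‖y‖ ^ 2) ((-2 : ℝ) • innerSL ℝ x) x := by
  refine ((hasFDerivAt_const (1 : ℝ) x).fun_sub (hasFDerivAt_id x).norm_sq).congr_fderiv ?_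
  ext v
  simp

lemma hasFDerivAt_ballWeight (μ : ℝ) (hx : ‖x‖ < 1) :
    HasFDerivAt (ballWeight μ) ((-2 * μ * ballWeight (μ - 1) x) • innerSL ℝ x) x := by
  have hrpow := Real.hasDerivAt_rpow_const (p := μ) (Or.inl (one_sub_norm_sq_pos hx).ne')
  refine (hrpow.comp_hasFDerivAt x (hasFDerivAt_one_sub_norm_sq x)).congr_fderiv ?_
  rw [smul_smul, ballWeight]
  ring_nf

lemma fderiv_ballWeight_apply (μ : ℝ) (hx : ‖x‖ < 1) (v : F) :
    fderiv ℝ (ballWeight μ) x v = -2 * μ * ballWeight (μ - 1) x * inner ℝ x v := by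
  simp [(hasFDerivAt_ballWeight μ hx).fderiv]

lemma contDiffAt_ballWeight (μ : ℝ) (hx : ‖x‖ < 1) {k : WithTop ℕ∞} :
    ContDiffAt ℝ k (ballWeight μ) x :=
  (contDiffAt_const.sub (contDiffAt_id.norm_sq ℝ)).rpow_const_of_ne (one_sub_norm_sq_pos hx).ne'

lemma dirDeriv2_ballWeight (μ : ℝ) (hx : ‖x‖ < 1) (v : F) :
    dirDeriv2 (ballWeight μ) x v =
      -2 * μ * ballWeight (μ - 1) x * ‖v‖ ^ 2
        + 4 * μ * (μ - 1) * ballWeight (μ - 2) x * inner ℝ x v ^ 2 := by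
  have hball : ∀ᶠ y in 𝓝 x, ‖y‖ < 1 :=
    (isOpen_lt continuous_norm continuous_const).mem_nhds hx
  have hderiv : (fun y => fderiv ℝ (ballWeight μ) y v) =ᶠ[𝓝 x]
      fun y => -2 * μ * ballWeight (μ - 1) y * inner ℝ y v := by
    filter_upwards [hball] with y hy
    exact fderiv_ballWeight_apply μ hy v
  have hinner : HasFDerivAt (fun y : F => inner ℝ y v) (innerSL ℝ v) x := by
    simpa [real_inner_comm] using (innerSL ℝ v).hasFDerivAt
  unfold dirDeriv2
  rw [hderiv.fderiv_eq,
    (((hasFDerivAt_ballWeight (μ - 1) hx).const_mul (-2 * μ)).fun_mul hinner).fderiv]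
  simp only [add_apply, smul_apply, coe_innerSL_apply, real_inner_self_eq_norm_sq, smul_eq_mul,
    sub_sub, one_add_one_eq_two]
  ring

end BallWeight

section OrthonormalBasis

variable {ι F : Type*} [Fintype ι] [NormedAddCommGroup F] [InnerProductSpace ℝ F]
  (b : OrthonormalBasis ι ℝ F) {x : F}

lemma OrthonormalBasis.sum_inner_smul_apply {G : Type*} [NormedAddCommGroup G]
    [NormedSpace ℝ G] (L : F →L[ℝ] G) (x : F) :
    ∑ i, inner ℝ x (b i) • L (b i) = L x := by
  conv_rhs => rw [← b.sum_repr' x]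
  simp [real_inner_comm]

lemma OrthonormalBasis.sum_dirDeriv2_ballWeight (μ : ℝ) (hx : ‖x‖ < 1) :
    ∑ i, dirDeriv2 (ballWeight μ) x (b i) =
      -2 * μ * Fintype.card ι * ballWeight (μ - 1) x
        + 4 * μ * (μ - 1) * ballWeight (μ - 2) x * ‖x‖ ^ 2 := by
  simp only [dirDeriv2_ballWeight μ hx, b.norm_eq_one, one_pow, mul_one, Finset.sum_add_distrib,
    ← Finset.mul_sum, b.sum_sq_inner_left, Finset.sum_const, Finset.card_univ, nsmul_eq_mul]
  ring

end OrthonormalBasis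

section UnitBall

variable {n : ℕ} {x : E n}

lemma lap_eq_sum_dirDeriv2 (f : E n → ℂ) (x : E n) :
    lap f x = ∑ i, dirDeriv2 f x (EuclideanSpace.basisFun (Fin n) ℝ i) := by
  simp [lap, dirDeriv2]

lemma lap_ballWeight_smul (μ : ℝ) (hx : ‖x‖ < 1) {g : E n → ℂ} (hg : ContDiffAt ℝ 2 g x) :
    lap (fun y => ballWeight μ y • g y) x =
      ballWeight μ x • lap g x + (-4 * μ * ballWeight (μ - 1) x) • radialDeriv g x
        + (-2 * μ * n * ballWeight (μ - 1) x
            + 4 * μ * (μ - 1) * ballWeight (μ - 2) x * ‖x‖ ^ 2) • g x := by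
  set b := EuclideanSpace.basisFun (Fin n) ℝ with hb
  have hcross : ∑ i, (2 * fderiv ℝ (ballWeight μ) x (b i)) • fderiv ℝ g x (b i) =
      (-4 * μ * ballWeight (μ - 1) x) • radialDeriv g x := by
    rw [radialDeriv, ← b.sum_inner_smul_apply (fderiv ℝ g x) x, Finset.smul_sum]
    refine Finset.sum_congr rfl fun i _ => ?_
    rw [fderiv_ballWeight_apply μ hx, smul_smul]
    ring_nf
  simp only [lap_eq_sum_dirDeriv2, ← hb]
  simp only [dirDeriv2_smul (contDiffAt_ballWeight μ hx) hg,
    Finset.sum_add_distrib, ← Finset.smul_sum, ← Finset.sum_smul, hcross,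
    b.sum_dirDeriv2_ballWeight μ hx, Fintype.card_fin]

lemma radialDeriv_ballWeight_smul (μ : ℝ) (hx : ‖x‖ < 1) {g : E n → ℂ}
    (hg : DifferentiableAt ℝ g x) :
    radialDeriv (fun y => ballWeight μ y • g y) x =
      ballWeight μ x • radialDeriv g x + (-2 * μ * ballWeight (μ - 1) x * ‖x‖ ^ 2) • g x := by
  have hw : DifferentiableAt ℝ (ballWeight μ) x :=
    (contDiffAt_ballWeight μ hx (k := 1)).differentiableAt (by norm_num)
  rw [radialDeriv, radialDeriv, fderiv_fun_smul hw hg]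
  simp only [add_apply, smul_apply, ContinuousLinearMap.smulRight_apply,
    fderiv_ballWeight_apply μ hx, real_inner_self_eq_norm_sq]

end UnitBall

lemma Mr_eq_ballWeight_smul {n : ℕ} (μ : ℝ) (f : E n → ℂ) :
    Mr μ f = fun y => ballWeight μ y • f y := by
  funext y
  rw [Complex.real_smul]
  rfl

theorem stmt4_general (n : ℕ) (θ lam : ℝ) (u : E n → ℂ)
    (hu : ContDiffOn ℝ 2 u (unitBall n)) :
    ∀ x ∈ unitBall n,
      Lop θ (Mr lam u) x =
        Mr lam (Lop (θ - lam) u) x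
          + ((4 * lam * (lam - 1 - 2 * θ) : ℝ) : ℂ) * Mr (lam - 1) u x := by
  intro x hx
  have hx_norm : ‖x‖ < 1 := mem_ball_zero_iff.mp hx
  have hux : ContDiffAt ℝ 2 u x := hu.contDiffAt (Metric.isOpen_ball.mem_nhds hx)
  have hw₁ : ballWeight (lam - 1) x = ballWeight (lam - 2) x * (1 - ‖x‖ ^ 2) := by
    rw [ballWeight_eq_mul (lam - 1) hx_norm, sub_sub, one_add_one_eq_two]
  have hw₀ : ballWeight lam x = ballWeight (lam - 2) x * (1 - ‖x‖ ^ 2) ^ 2 := by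
    rw [ballWeight_eq_mul lam hx_norm, hw₁]
    ring
  simp only [Lop, Mr_eq_ballWeight_smul]
  rw [lap_ballWeight_smul lam hx_norm hux,
    radialDeriv_ballWeight_smul lam hx_norm (hux.differentiableAt two_ne_zero)]
  simp only [hw₀, hw₁, Complex.real_smul]
  push_cast
  ring

/-- the correspondence principle
`L_θ M^λ = M^λ L_{θ-λ} + 4λ(λ-1-2θ) M^{λ-1}`. -/
theorem stmt4 (n : ℕ) (hn : 2 ≤ n) (θ lam : ℝ) (u : E n → ℂ)
    (hu : ContDiffOn ℝ 2 u (unitBall n)) :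
    ∀ x ∈ unitBall n,
      Lop θ (Mr lam u) x =
        Mr lam (Lop (θ - lam) u) x
          + ((4 * lam * (lam - 1 - 2 * θ) : ℝ) : ℂ) * Mr (lam - 1) u x :=
  stmt4_general n θ lam u hu
end

section
/- (Factorization) Let n ≥ 2 and N ∈ ℕ (N ≥ 1). For every 2N-times continuously differentiable function u on 𝔹, the composition of the operators L_0, L_1, …, L_{N-1} satisfies L_0[L_1[⋯ L_{N-1}[u] ⋯]] (x) = (1-|x|²)^N (Δ^N u)(x) for all x ∈ 𝔹; in operator form, L_0 L_1 ⋯ L_{N-1} = M^N Δ^N. -/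
open MeasureTheory
open scoped BigOperators ENNReal Classical

/-- The composition `L_0 L_1 ⋯ L_{N-1}`. -/
noncomputable def Lcomp {n : ℕ} : ℕ → (E n → ℂ) → (E n → ℂ)
  | 0, u => u
  | (k + 1), u => Lcomp k (Lop (k : ℝ) u)

/-!
Write `Q = 1 - ‖x‖²`. Two commutation rules do all the work: `Δ (Q f) = Q Δf - 4 R f - 2n f`
(that is, `Δ M = L_{-1}`), and `Δ R = R Δ + 2 Δ`, which comes from the symmetry of second
derivatives. Iterating them gives `Δ^k R = R Δ^k + 2k Δ^k` and
`Δ^{k+1} (Q f) = Q Δ^{k+1} f - 4(k+1) R Δ^k f - 2(k+1)(n+2k) Δ^k f`. In `Δ^k L_k u` the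
radial terms then cancel, and so do the multiples of `Δ^k u`, because
`2k(n-2-2k) + 8k² - 2k(n+2k-2) = 0`; hence `Δ^k L_k = M Δ^{k+1}`. Induction on `N` finishes:
`L_0 ⋯ L_{N-1} L_N = M^N Δ^N L_N = M^{N+1} Δ^{N+1}`.
-/

open Filter Topology

noncomputable section

variable {n : ℕ} {f g : E n → ℂ} {x : E n}

def partialDeriv (i : Fin n) (f : E n → ℂ) : E n → ℂ :=
  fun x => fderiv ℝ f x (EuclideanSpace.single i 1)

theorem lap_eq_sum_partialDeriv (f : E n → ℂ) (x : E n) :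
    lap f x = ∑ i, partialDeriv i (partialDeriv i f) x := rfl

section NatSmoothness

variable {F G : Type*} [NormedAddCommGroup F] [NormedSpace ℝ F] [NormedAddCommGroup G]
  [NormedSpace ℝ G] {h : F → G} {a : F}

theorem ContDiffAt.of_natCast_le {m k : ℕ} (hh : ContDiffAt ℝ k h a) (hmk : m ≤ k) :
    ContDiffAt ℝ m h a :=
  hh.of_le (mod_cast hmk)

theorem ContDiffAt.eventually_natCast {m : ℕ} (hh : ContDiffAt ℝ m h a) :
    ∀ᶠ y in 𝓝 a, ContDiffAt ℝ m h y :=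
  hh.eventually (mod_cast ENat.natCast_ne_top m)

theorem ContDiffAt.eventually_differentiableAt_s7 (hh : ContDiffAt ℝ 2 h a) :
    ∀ᶠ y in 𝓝 a, DifferentiableAt ℝ h y :=
  (hh.eventually (by simp)).mono fun _ hy => hy.differentiableAt two_ne_zero

end NatSmoothness

theorem contDiffAt_partialDeriv {m : ℕ} (hf : ContDiffAt ℝ (m + 1 : ℕ) f x) (i : Fin n) :
    ContDiffAt ℝ m (partialDeriv i f) x :=
  (hf.fderiv_right (m := m) (by push_cast; rfl)).clm_apply contDiffAt_const

theorem contDiffAt_radialDeriv {m : ℕ} (hf : ContDiffAt ℝ (m + 1 : ℕ) f x) :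
    ContDiffAt ℝ m (radialDeriv f) x :=
  (hf.fderiv_right (m := m) (by push_cast; rfl)).clm_apply contDiffAt_id

theorem contDiffAt_lap {m : ℕ} (hf : ContDiffAt ℝ (m + 2 : ℕ) f x) :
    ContDiffAt ℝ m (lap f) x :=
  ContDiffAt.sum fun i _ => contDiffAt_partialDeriv (contDiffAt_partialDeriv hf i) i

theorem contDiffAt_lapIter {m : ℕ} (k : ℕ) (hf : ContDiffAt ℝ (m + 2 * k : ℕ) f x) :
    ContDiffAt ℝ m (lapIter k f) x := by
  induction k generalizing f with
  | zero => exact hf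
  | succ k ih => exact ih (contDiffAt_lap (hf.of_natCast_le (by omega)))

theorem differentiableAt_partialDeriv (hf : ContDiffAt ℝ 2 f x) (i : Fin n) :
    DifferentiableAt ℝ (partialDeriv i f) x :=
  (contDiffAt_partialDeriv (m := 1) hf i).differentiableAt one_ne_zero

theorem Filter.EventuallyEq.partialDeriv (h : f =ᶠ[𝓝 x] g) (i : Fin n) :
    partialDeriv i f =ᶠ[𝓝 x] partialDeriv i g :=
  h.eventuallyEq_nhds.mono fun _ hy => by simp only [_root_.partialDeriv, hy.fderiv_eq]

theorem Filter.EventuallyEq.lap (h : f =ᶠ[𝓝 x] g) :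
    _root_.lap f =ᶠ[𝓝 x] _root_.lap g := by
  filter_upwards [eventually_all.2 fun i => (h.partialDeriv i).partialDeriv i] with y hy
  simp only [lap_eq_sum_partialDeriv, hy]

theorem partialDeriv_add (hf : DifferentiableAt ℝ f x) (hg : DifferentiableAt ℝ g x)
    (i : Fin n) :
    partialDeriv i (fun y => f y + g y) x = partialDeriv i f x + partialDeriv i g x := by
  simp only [partialDeriv, fderiv_fun_add hf hg, add_apply]

theorem partialDeriv_const_mul (hf : DifferentiableAt ℝ f x) (c : ℂ) (i : Fin n) :
    partialDeriv i (fun y => c * f y) x = c * partialDeriv i f x := by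
  simp only [partialDeriv, fderiv_const_mul hf c, smul_apply, smul_eq_mul]

theorem partialDeriv_mul (hf : DifferentiableAt ℝ f x) (hg : DifferentiableAt ℝ g x)
    (i : Fin n) :
    partialDeriv i (fun y => f y * g y) x
      = partialDeriv i f x * g x + f x * partialDeriv i g x := by
  simp only [partialDeriv, fderiv_fun_mul hf hg, add_apply,
    smul_apply, smul_eq_mul]
  ring

theorem lap_add (hf : ContDiffAt ℝ 2 f x) (hg : ContDiffAt ℝ 2 g x) :
    lap (fun y => f y + g y) x = lap f x + lap g x := by
  simp only [lap_eq_sum_partialDeriv, ← Finset.sum_add_distrib]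
  refine Finset.sum_congr rfl fun i _ => ?_
  have hpd : partialDeriv i (fun y => f y + g y)
      =ᶠ[𝓝 x] fun y => partialDeriv i f y + partialDeriv i g y := by
    filter_upwards [hf.eventually_differentiableAt_s7, hg.eventually_differentiableAt_s7]
      with y hfy hgy
    exact partialDeriv_add hfy hgy i
  rw [(hpd.partialDeriv i).eq_of_nhds, partialDeriv_add (differentiableAt_partialDeriv hf i)
    (differentiableAt_partialDeriv hg i)]

theorem lap_const_mul (hf : ContDiffAt ℝ 2 f x) (c : ℂ) :
    lap (fun y => c * f y) x = c * lap f x := by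
  simp only [lap_eq_sum_partialDeriv, Finset.mul_sum]
  refine Finset.sum_congr rfl fun i _ => ?_
  have hpd : partialDeriv i (fun y => c * f y) =ᶠ[𝓝 x] fun y => c * partialDeriv i f y := by
    filter_upwards [hf.eventually_differentiableAt_s7] with y hfy
    exact partialDeriv_const_mul hfy c i
  rw [(hpd.partialDeriv i).eq_of_nhds, partialDeriv_const_mul (differentiableAt_partialDeriv hf i)]

theorem lap_mul (hf : ContDiffAt ℝ 2 f x) (hg : ContDiffAt ℝ 2 g x) :
    lap (fun y => f y * g y) x
      = lap f x * g x + 2 * ∑ i, partialDeriv i f x * partialDeriv i g x + f x * lap g x := by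
  simp only [lap_eq_sum_partialDeriv, Finset.mul_sum, Finset.sum_mul, ← Finset.sum_add_distrib]
  refine Finset.sum_congr rfl fun i _ => ?_
  have hpd : partialDeriv i (fun y => f y * g y) =ᶠ[𝓝 x]
      fun y => partialDeriv i f y * g y + f y * partialDeriv i g y := by
    filter_upwards [hf.eventually_differentiableAt_s7, hg.eventually_differentiableAt_s7]
      with y hfy hgy
    exact partialDeriv_mul hfy hgy i
  have hf₁ := hf.differentiableAt two_ne_zero
  have hg₁ := hg.differentiableAt two_ne_zero
  have hf₂ := differentiableAt_partialDeriv hf i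
  have hg₂ := differentiableAt_partialDeriv hg i
  rw [(hpd.partialDeriv i).eq_of_nhds, partialDeriv_add (hf₂.fun_mul hg₁) (hf₁.fun_mul hg₂),
    partialDeriv_mul hf₂ hg₁, partialDeriv_mul hf₁ hg₂]
  ring

theorem radialDeriv_eq_sum (f : E n → ℂ) (x : E n) :
    radialDeriv f x = ∑ i, (x i : ℂ) * partialDeriv i f x := by
  have hx := congrArg (fderiv ℝ f x) ((EuclideanSpace.basisFun (Fin n) ℝ).sum_repr x)
  rw [radialDeriv, ← hx]
  simp only [map_sum, map_smul, EuclideanSpace.basisFun_apply, EuclideanSpace.basisFun_repr,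
    Complex.real_smul, partialDeriv]

theorem partialDeriv_radialDeriv (hf : ContDiffAt ℝ 2 f x) (i : Fin n) :
    partialDeriv i (radialDeriv f) x = radialDeriv (partialDeriv i f) x + partialDeriv i f x := by
  have hf' : DifferentiableAt ℝ (fderiv ℝ f) x :=
    (hf.fderiv_right (m := 1) le_rfl).differentiableAt one_ne_zero
  have hR : fderiv ℝ (radialDeriv f) x = fderiv ℝ (fun y => fderiv ℝ f y y) x := rfl
  have hpd : fderiv ℝ (partialDeriv i f) x
      = fderiv ℝ (fun y => fderiv ℝ f y (EuclideanSpace.single i 1)) x := rfl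
  simp only [partialDeriv, radialDeriv]
  rw [hR, hpd, fderiv_clm_apply (u := fun y => y) hf' differentiableAt_id,
    fderiv_clm_apply (u := fun _ => EuclideanSpace.single i 1) hf' (differentiableAt_const _)]
  simp only [fderiv_fun_id, fderiv_fun_const, add_apply, ContinuousLinearMap.comp_apply,
    ContinuousLinearMap.flip_apply, ContinuousLinearMap.id_apply, Pi.zero_apply, zero_apply,
    map_zero, zero_add, (hf.isSymmSndFDerivAt (by simp)).eq x, add_comm]

theorem lap_radialDeriv (hf : ContDiffAt ℝ 3 f x) :
    lap (radialDeriv f) x = radialDeriv (lap f) x + 2 * lap f x := by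
  have hpdf : ∀ i, ContDiffAt ℝ 2 (partialDeriv i f) x := fun i =>
    contDiffAt_partialDeriv (m := 2) hf i
  have hpd : ∀ i, partialDeriv i (radialDeriv f)
      =ᶠ[𝓝 x] fun y => radialDeriv (partialDeriv i f) y + partialDeriv i f y := fun i => by
    filter_upwards [hf.eventually (by simp)] with y hy
    exact partialDeriv_radialDeriv (hy.of_le (by norm_num)) i
  have hRlap :
      radialDeriv (lap f) x = ∑ i, radialDeriv (partialDeriv i (partialDeriv i f)) x := by
    have hd : ∀ i ∈ Finset.univ, DifferentiableAt ℝ (partialDeriv i (partialDeriv i f)) x :=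
      fun i _ => differentiableAt_partialDeriv (hpdf i) i
    simp only [radialDeriv, funext (lap_eq_sum_partialDeriv f), fderiv_fun_sum hd,
      sum_apply]
  rw [lap_eq_sum_partialDeriv, hRlap, lap_eq_sum_partialDeriv, Finset.mul_sum,
    ← Finset.sum_add_distrib]
  refine Finset.sum_congr rfl fun i _ => ?_
  rw [((hpd i).partialDeriv i).eq_of_nhds, partialDeriv_add ?_ ?_,
    partialDeriv_radialDeriv (hpdf i)]
  · ring
  · exact (contDiffAt_radialDeriv (m := 1) (hpdf i)).differentiableAt one_ne_zero
  · exact (hpdf i).differentiableAt two_ne_zero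

theorem lapIter_zero (f : E n → ℂ) : lapIter 0 f = f := rfl

theorem lapIter_succ (k : ℕ) (f : E n → ℂ) : lapIter (k + 1) f = lapIter k (lap f) :=
  Function.iterate_succ_apply lap k f

theorem lapIter_succ' (k : ℕ) (f : E n → ℂ) : lapIter (k + 1) f = lap (lapIter k f) :=
  Function.iterate_succ_apply' lap k f

theorem Filter.EventuallyEq.lapIter (h : f =ᶠ[𝓝 x] g) (k : ℕ) :
    _root_.lapIter k f =ᶠ[𝓝 x] _root_.lapIter k g := by
  induction k with
  | zero => exact h
  | succ k ih => simpa only [lapIter_succ'] using ih.lap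

theorem lapIter_add (k : ℕ) (hf : ContDiffAt ℝ (2 * k : ℕ) f x)
    (hg : ContDiffAt ℝ (2 * k : ℕ) g x) :
    lapIter k (fun y => f y + g y) x = lapIter k f x + lapIter k g x := by
  induction k generalizing x with
  | zero => rfl
  | succ k ih =>
    have hsum : lapIter k (fun y => f y + g y)
        =ᶠ[𝓝 x] fun y => lapIter k f y + lapIter k g y := by
      filter_upwards [hf.eventually_natCast, hg.eventually_natCast] with y hfy hgy
      exact ih (hfy.of_natCast_le (by omega)) (hgy.of_natCast_le (by omega))
    rw [lapIter_succ', lapIter_succ', lapIter_succ', hsum.lap.eq_of_nhds,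
      lap_add (contDiffAt_lapIter (m := 2) k (hf.of_natCast_le (by omega)))
        (contDiffAt_lapIter (m := 2) k (hg.of_natCast_le (by omega)))]

theorem lapIter_const_mul (k : ℕ) (hf : ContDiffAt ℝ (2 * k : ℕ) f x) (c : ℂ) :
    lapIter k (fun y => c * f y) x = c * lapIter k f x := by
  induction k generalizing x with
  | zero => rfl
  | succ k ih =>
    have hmul : lapIter k (fun y => c * f y) =ᶠ[𝓝 x] fun y => c * lapIter k f y := by
      filter_upwards [hf.eventually_natCast] with y hfy
      exact ih (hfy.of_natCast_le (by omega))
    rw [lapIter_succ', lapIter_succ', hmul.lap.eq_of_nhds,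
      lap_const_mul (contDiffAt_lapIter (m := 2) k (hf.of_natCast_le (by omega)))]

theorem lapIter_radialDeriv (k : ℕ) (hf : ContDiffAt ℝ (2 * k + 1 : ℕ) f x) :
    lapIter k (radialDeriv f) x = radialDeriv (lapIter k f) x + 2 * k * lapIter k f x := by
  induction k generalizing f with
  | zero => simp [lapIter_zero]
  | succ k ih =>
    have hlap : ContDiffAt ℝ (2 * k + 1 : ℕ) (lap f) x :=
      contDiffAt_lap (hf.of_natCast_le (by omega))
    have hcomm : lap (radialDeriv f) =ᶠ[𝓝 x] fun y => radialDeriv (lap f) y + 2 * lap f y := by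
      filter_upwards [hf.eventually_natCast] with y hy
      exact lap_radialDeriv (hy.of_natCast_le (m := 3) (by omega))
    rw [lapIter_succ, (hcomm.lapIter k).eq_of_nhds,
      lapIter_add k (contDiffAt_radialDeriv hlap)
        (contDiffAt_const.mul (hlap.of_natCast_le (by omega))),
      lapIter_const_mul k (hlap.of_natCast_le (by omega)), ih hlap, ← lapIter_succ]
    push_cast
    ring

variable (n) in
def oneSubNormSq : E n → ℂ := fun x => ((1 - ‖x‖ ^ 2 : ℝ) : ℂ)

theorem contDiff_oneSubNormSq {m : WithTop ℕ∞} : ContDiff ℝ m (oneSubNormSq n) :=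
  Complex.ofRealCLM.contDiff.comp (contDiff_const.sub (contDiff_norm_sq ℝ))

theorem partialDeriv_oneSubNormSq (i : Fin n) :
    partialDeriv i (oneSubNormSq n) = fun y => -2 * (y i : ℂ) := by
  funext y
  have hQ : HasFDerivAt (oneSubNormSq n)
      (Complex.ofRealCLM.comp (-(2 • innerSL ℝ y))) y :=
    Complex.ofRealCLM.hasFDerivAt.comp y ((hasStrictFDerivAt_norm_sq y).hasFDerivAt.const_sub 1)
  simp [partialDeriv, hQ.fderiv, EuclideanSpace.inner_single_right]

theorem lap_oneSubNormSq (x : E n) : lap (oneSubNormSq n) x = -2 * n := by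
  have hcoord : ∀ i : Fin n, HasFDerivAt (fun y : E n => ((y i : ℝ) : ℂ))
      (Complex.ofRealCLM.comp (EuclideanSpace.proj i)) x := fun i =>
    (Complex.ofRealCLM.comp (EuclideanSpace.proj i)).hasFDerivAt
  have hpd : ∀ i, partialDeriv i (fun y : E n => -2 * (y i : ℂ)) x = -2 := fun i => by
    rw [partialDeriv_const_mul (hcoord i).differentiableAt, partialDeriv, (hcoord i).fderiv]
    simp
  simp only [lap_eq_sum_partialDeriv, partialDeriv_oneSubNormSq, hpd, Finset.sum_const,
    Finset.card_univ, Fintype.card_fin, nsmul_eq_mul]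
  ring

theorem lap_oneSubNormSq_mul (hf : ContDiffAt ℝ 2 f x) :
    lap (fun y => oneSubNormSq n y * f y) x
      = oneSubNormSq n x * lap f x - 4 * radialDeriv f x - 2 * n * f x := by
  rw [lap_mul contDiff_oneSubNormSq.contDiffAt hf, lap_oneSubNormSq, radialDeriv_eq_sum]
  simp only [partialDeriv_oneSubNormSq, mul_assoc, ← Finset.mul_sum]
  ring

theorem Lop_eq (θ : ℝ) (f : E n → ℂ) :
    Lop θ f = fun y => oneSubNormSq n y * lap f y + ((4 * θ : ℝ) : ℂ) * radialDeriv f y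
      + ((2 * θ * ((n : ℝ) - 2 - 2 * θ) : ℝ) : ℂ) * f y := rfl

theorem lapIter_Lop_apply (k : ℕ) (θ : ℝ) (hf : ContDiffAt ℝ (2 * k + 2 : ℕ) f x) :
    lapIter k (Lop θ f) x = lapIter k (fun y => oneSubNormSq n y * lap f y) x
      + ((4 * θ : ℝ) : ℂ) * lapIter k (radialDeriv f) x
      + ((2 * θ * ((n : ℝ) - 2 - 2 * θ) : ℝ) : ℂ) * lapIter k f x := by
  have hA : ContDiffAt ℝ (2 * k : ℕ) (fun y => oneSubNormSq n y * lap f y) x :=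
    contDiff_oneSubNormSq.contDiffAt.mul (contDiffAt_lap hf)
  have hR : ContDiffAt ℝ (2 * k : ℕ) (radialDeriv f) x :=
    contDiffAt_radialDeriv (hf.of_natCast_le (by omega))
  have hf' : ContDiffAt ℝ (2 * k : ℕ) f x := hf.of_natCast_le (by omega)
  rw [Lop_eq, lapIter_add k (hA.add (contDiffAt_const.mul hR)) (contDiffAt_const.mul hf'),
    lapIter_add k hA (contDiffAt_const.mul hR), lapIter_const_mul k hR, lapIter_const_mul k hf']

theorem lapIter_oneSubNormSq_mul (k : ℕ) (hf : ContDiffAt ℝ (2 * k + 2 : ℕ) f x) :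
    lapIter (k + 1) (fun y => oneSubNormSq n y * f y) x
      = oneSubNormSq n x * lapIter (k + 1) f x - 4 * (k + 1) * radialDeriv (lapIter k f) x
        - 2 * (k + 1) * (n + 2 * k) * lapIter k f x := by
  induction k generalizing f with
  | zero =>
    rw [zero_add, lapIter_succ', lapIter_succ', lapIter_zero, lapIter_zero,
      lap_oneSubNormSq_mul (hf.of_natCast_le (m := 2) le_rfl)]
    push_cast
    ring
  | succ k ih =>
    have hQf : lap (fun y => oneSubNormSq n y * f y) =ᶠ[𝓝 x] Lop (-1) f := by
      filter_upwards [hf.eventually_natCast] with y hy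
      rw [lap_oneSubNormSq_mul (hy.of_natCast_le (m := 2) (by omega)), Lop_eq]
      push_cast
      ring
    rw [lapIter_succ (k + 1), (hQf.lapIter (k + 1)).eq_of_nhds,
      lapIter_Lop_apply (k + 1) (-1) (hf.of_natCast_le (by omega)),
      ih (contDiffAt_lap (hf.of_natCast_le (by omega))),
      lapIter_radialDeriv (k + 1) (hf.of_natCast_le (by omega)), ← lapIter_succ, ← lapIter_succ]
    push_cast
    ring

theorem lapIter_Lop_self (k : ℕ) (hf : ContDiffAt ℝ (2 * k + 2 : ℕ) f x) :
    lapIter k (Lop k f) x = oneSubNormSq n x * lapIter (k + 1) f x := by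
  cases k with
  | zero => simp [Lop, oneSubNormSq, lapIter_zero, lapIter_succ]
  | succ k =>
    rw [lapIter_Lop_apply (k + 1) _ hf,
      lapIter_oneSubNormSq_mul k (contDiffAt_lap (hf.of_natCast_le (by omega))),
      lapIter_radialDeriv (k + 1) (hf.of_natCast_le (by omega)), ← lapIter_succ, ← lapIter_succ]
    push_cast
    ring

theorem contDiffAt_Lop {m : ℕ} (θ : ℝ) (hf : ContDiffAt ℝ (m + 2 : ℕ) f x) :
    ContDiffAt ℝ m (Lop θ f) x := by
  rw [Lop_eq]
  exact ((contDiff_oneSubNormSq.contDiffAt.mul (contDiffAt_lap hf)).add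
    (contDiffAt_const.mul (contDiffAt_radialDeriv (hf.of_natCast_le (by omega))))).add
    (contDiffAt_const.mul (hf.of_natCast_le (by omega)))

theorem Lcomp_eq_mul_lapIter (N : ℕ) (hf : ContDiffAt ℝ (2 * N : ℕ) f x) :
    Lcomp N f x = (((1 - ‖x‖ ^ 2) ^ N : ℝ) : ℂ) * lapIter N f x := by
  induction N generalizing f with
  | zero => simp [Lcomp, lapIter_zero]
  | succ N ih =>
    have hf' : ContDiffAt ℝ (2 * N + 2 : ℕ) f x := hf.of_natCast_le (by omega)
    rw [Lcomp, ih (contDiffAt_Lop N hf'), lapIter_Lop_self N hf', oneSubNormSq]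
    push_cast
    ring

end

theorem stmt7_general (n N : ℕ) (u : E n → ℂ)
    (hu : ContDiffOn ℝ (2 * N : ℕ) u (unitBall n)) :
    ∀ x ∈ unitBall n,
      Lcomp N u x = (((1 - ‖x‖ ^ 2) ^ N : ℝ) : ℂ) * lapIter N u x := fun _ hx =>
  Lcomp_eq_mul_lapIter N (hu.contDiffAt (Metric.isOpen_ball.mem_nhds hx))

/-- the factorization `L_0 L_1 ⋯ L_{N-1} = M^N Δ^N`. -/
theorem stmt7 (n N : ℕ) (hn : 2 ≤ n) (hN : 1 ≤ N) (u : E n → ℂ)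
    (hu : ContDiffOn ℝ (2 * N : ℕ) u (unitBall n)) :
    ∀ x ∈ unitBall n,
      Lcomp N u x = (((1 - ‖x‖ ^ 2) ^ N : ℝ) : ℂ) * lapIter N u x :=
  stmt7_general n N u hu
end

section
/- Let n ≥ 2, N ∈ ℕ (N ≥ 1) and j ∈ {0,1,…,N-1}. If u is a smooth (C^∞) function on 𝔹 satisfying L_{N-j-1}[u] = 0 on 𝔹, then M^j[u] is N-harmonic on 𝔹, i.e., Δ^N((1-|x|²)^j u(x)) = 0 for all x ∈ 𝔹. In particular (the case j = 0), every smooth solution of L_{N-1}[u] = 0 on 𝔹 is N-harmonic on 𝔹. -/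
open MeasureTheory
open scoped BigOperators ENNReal Classical

noncomputable section

namespace S8

variable {n : ℕ} {s : Set (E n)} {f g : E n → ℂ} {x : E n}

lemma euclid_decomp (x : E n) : x = ∑ i, x i • EuclideanSpace.single i (1:ℝ) := by
  have := (EuclideanSpace.basisFun (Fin n) ℝ).sum_repr x
  simp only [EuclideanSpace.basisFun_apply, EuclideanSpace.basisFun_repr] at this
  exact this.symm

lemma clm_decomp (φ : E n →L[ℝ] ℂ) (x : E n) :
    φ x = ∑ i, (x i : ℂ) * φ (EuclideanSpace.single i 1) := by
  conv_lhs => rw [euclid_decomp x]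
  rw [map_sum]
  refine Finset.sum_congr rfl fun i _ => ?_
  rw [_root_.map_smul, Complex.real_smul]

lemma radial_eq_sum (f : E n → ℂ) (x : E n) :
    radialDeriv f x = ∑ i, (x i : ℂ) * fderiv ℝ f x (EuclideanSpace.single i 1) :=
  clm_decomp _ x

/-! ### Smoothness plumbing -/

lemma contDiffAt_pd (hs : IsOpen s) (hf : ContDiffOn ℝ (⊤:ℕ∞) f s) (hx : x ∈ s) (v : E n) :
    ContDiffAt ℝ (⊤:ℕ∞) (fun y => fderiv ℝ f y v) x := by
  have h1 : ContDiffAt ℝ (⊤:ℕ∞) (fderiv ℝ f) x :=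
    (hf.contDiffAt (hs.mem_nhds hx)).fderiv_right (by exact_mod_cast le_top)
  exact h1.clm_apply contDiffAt_const

lemma contDiffOn_pd (hs : IsOpen s) (hf : ContDiffOn ℝ (⊤:ℕ∞) f s) (v : E n) :
    ContDiffOn ℝ (⊤:ℕ∞) (fun y => fderiv ℝ f y v) s :=
  fun x hx => (contDiffAt_pd hs hf hx v).contDiffWithinAt

lemma contDiffOn_lap (hs : IsOpen s) (hf : ContDiffOn ℝ (⊤:ℕ∞) f s) :
    ContDiffOn ℝ (⊤:ℕ∞) (lap f) s := by
  apply ContDiffOn.sum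
  intro i _
  exact contDiffOn_pd hs (contDiffOn_pd hs hf _) _

lemma contDiffOn_radial (hs : IsOpen s) (hf : ContDiffOn ℝ (⊤:ℕ∞) f s) :
    ContDiffOn ℝ (⊤:ℕ∞) (radialDeriv f) s := by
  intro x hx
  have h1 : ContDiffAt ℝ (⊤:ℕ∞) (fderiv ℝ f) x :=
    (hf.contDiffAt (hs.mem_nhds hx)).fderiv_right (by exact_mod_cast le_top)
  exact (h1.clm_apply contDiffAt_id).contDiffWithinAt

lemma diffAt (hs : IsOpen s) (hf : ContDiffOn ℝ (⊤:ℕ∞) f s) (hx : x ∈ s) :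
    DifferentiableAt ℝ f x :=
  (hf.contDiffAt (hs.mem_nhds hx)).differentiableAt (by simp)

/-! ### Congruence -/

lemma eventuallyEq_of_eqOn (hs : IsOpen s) (h : Set.EqOn f g s) (hx : x ∈ s) :
    f =ᶠ[nhds x] g :=
  Filter.eventuallyEq_iff_exists_mem.2 ⟨s, hs.mem_nhds hx, h⟩

lemma pd_eqOn (hs : IsOpen s) (h : Set.EqOn f g s) (v : E n) :
    Set.EqOn (fun y => fderiv ℝ f y v) (fun y => fderiv ℝ g y v) s := by
  intro y hy
  simp only
  rw [(eventuallyEq_of_eqOn hs h hy).fderiv_eq]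

lemma lap_eqOn (hs : IsOpen s) (h : Set.EqOn f g s) : Set.EqOn (lap f) (lap g) s := by
  intro y hy
  unfold lap
  refine Finset.sum_congr rfl fun i _ => ?_
  exact pd_eqOn hs (pd_eqOn hs h _) _ hy

lemma radial_eqOn (hs : IsOpen s) (h : Set.EqOn f g s) :
    Set.EqOn (radialDeriv f) (radialDeriv g) s := by
  intro y hy
  unfold radialDeriv
  rw [(eventuallyEq_of_eqOn hs h hy).fderiv_eq]

lemma lap_zero_fun : lap (fun _ : E n => (0:ℂ)) x = 0 := by
  unfold lap
  have h0 : (fun y : E n => fderiv ℝ (fun _ : E n => (0:ℂ)) y) = fun _ => 0 := by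
    funext y; exact fderiv_const_apply 0
  refine Finset.sum_eq_zero fun i _ => ?_
  have : (fun y : E n => fderiv ℝ (fun _ : E n => (0:ℂ)) y (EuclideanSpace.single i 1))
      = fun _ : E n => (0:ℂ) := by
    funext y; rw [fderiv_const_apply]; rfl
  rw [this, fderiv_const_apply]; rfl

lemma lap_zero_on (hs : IsOpen s) (h : ∀ y ∈ s, f y = 0) : ∀ y ∈ s, lap f y = 0 := by
  intro y hy
  have := lap_eqOn hs (fun z hz => (h z hz)) hy
  rw [this]
  exact lap_zero_fun

end S8

namespace S8

variable {n : ℕ} {s : Set (E n)} {f g p : E n → ℂ} {x : E n}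

lemma pdiffAt (hs : IsOpen s) (hf : ContDiffOn ℝ (⊤:ℕ∞) f s) (hx : x ∈ s) (v : E n) :
    DifferentiableAt ℝ (fun y => fderiv ℝ f y v) x :=
  (contDiffAt_pd hs hf hx v).differentiableAt (by simp)

lemma fderiv_add_apply' (hf : DifferentiableAt ℝ f x) (hg : DifferentiableAt ℝ g x) (v : E n) :
    fderiv ℝ (fun y => f y + g y) x v = fderiv ℝ f x v + fderiv ℝ g x v := by
  rw [fderiv_fun_add hf hg]; rfl

lemma fderiv_mul_apply' (hf : DifferentiableAt ℝ f x) (hg : DifferentiableAt ℝ g x) (v : E n) :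
    fderiv ℝ (fun y => f y * g y) x v = f x * fderiv ℝ g x v + g x * fderiv ℝ f x v := by
  rw [fderiv_fun_mul hf hg]
  simp [smul_eq_mul]

lemma lap_add (hs : IsOpen s) (hf : ContDiffOn ℝ (⊤:ℕ∞) f s) (hg : ContDiffOn ℝ (⊤:ℕ∞) g s)
    (hx : x ∈ s) :
    lap (fun y => f y + g y) x = lap f x + lap g x := by
  unfold lap
  rw [← Finset.sum_add_distrib]
  refine Finset.sum_congr rfl fun i _ => ?_
  set v := EuclideanSpace.single i (1:ℝ)
  have h1 : Set.EqOn (fun y => fderiv ℝ (fun z => f z + g z) y v)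
      (fun y => fderiv ℝ f y v + fderiv ℝ g y v) s := by
    intro y hy
    exact fderiv_add_apply' (diffAt hs hf hy) (diffAt hs hg hy) v
  rw [(eventuallyEq_of_eqOn hs h1 hx).fderiv_eq]
  exact fderiv_add_apply' (pdiffAt hs hf hx v) (pdiffAt hs hg hx v) v

lemma lap_const_mul (hs : IsOpen s) (hf : ContDiffOn ℝ (⊤:ℕ∞) f s) (hx : x ∈ s) (c : ℂ) :
    lap (fun y => c * f y) x = c * lap f x := by
  unfold lap
  rw [Finset.mul_sum]
  refine Finset.sum_congr rfl fun i _ => ?_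
  set v := EuclideanSpace.single i (1:ℝ)
  have h1 : Set.EqOn (fun y => fderiv ℝ (fun z => c * f z) y v)
      (fun y => c * fderiv ℝ f y v) s := by
    intro y hy
    show fderiv ℝ (fun z => c * f z) y v = c * fderiv ℝ f y v
    rw [fderiv_const_mul (diffAt hs hf hy) c]; rfl
  rw [(eventuallyEq_of_eqOn hs h1 hx).fderiv_eq]
  rw [fderiv_const_mul (pdiffAt hs hf hx v) c]; rfl

lemma lap_mul (hs : IsOpen s) (hp : ContDiffOn ℝ (⊤:ℕ∞) p s) (hf : ContDiffOn ℝ (⊤:ℕ∞) f s)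
    (hx : x ∈ s) :
    lap (fun y => p y * f y) x = p x * lap f x
      + 2 * ∑ i, fderiv ℝ p x (EuclideanSpace.single i 1) * fderiv ℝ f x (EuclideanSpace.single i 1)
      + lap p x * f x := by
  unfold lap
  have key : ∀ i : Fin n,
      fderiv ℝ (fun y => fderiv ℝ (fun z => p z * f z) y (EuclideanSpace.single i 1)) x
        (EuclideanSpace.single i 1)
      = p x * fderiv ℝ (fun y => fderiv ℝ f y (EuclideanSpace.single i 1)) x (EuclideanSpace.single i 1)
        + 2 * (fderiv ℝ p x (EuclideanSpace.single i 1) * fderiv ℝ f x (EuclideanSpace.single i 1))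
        + fderiv ℝ (fun y => fderiv ℝ p y (EuclideanSpace.single i 1)) x (EuclideanSpace.single i 1) * f x := by
    intro i
    set v := EuclideanSpace.single i (1:ℝ)
    have h1 : Set.EqOn (fun y => fderiv ℝ (fun z => p z * f z) y v)
        (fun y => p y * fderiv ℝ f y v + f y * fderiv ℝ p y v) s := by
      intro y hy
      exact fderiv_mul_apply' (diffAt hs hp hy) (diffAt hs hf hy) v
    rw [(eventuallyEq_of_eqOn hs h1 hx).fderiv_eq]
    have dpp := pdiffAt hs hp hx v
    have dpf := pdiffAt hs hf hx v
    have dp := diffAt hs hp hx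
    have df := diffAt hs hf hx
    rw [fderiv_add_apply' (f := fun y => p y * fderiv ℝ f y v) (g := fun y => f y * fderiv ℝ p y v)
        (dp.mul dpf) (df.mul dpp) v,
      fderiv_mul_apply' dp dpf v, fderiv_mul_apply' df dpp v]
    ring
  rw [Finset.sum_congr rfl fun i _ => key i]
  simp [Finset.sum_add_distrib, Finset.mul_sum, Finset.sum_mul]

end S8

namespace S8

variable {n : ℕ} {s : Set (E n)} {f g p : E n → ℂ} {x : E n}

/-- The complexified `k`-th coordinate functional. -/
def zeta (k : Fin n) : E n →L[ℝ] ℂ := Complex.ofRealCLM.comp (EuclideanSpace.proj k)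

@[simp] lemma zeta_apply (k : Fin n) (y : E n) : zeta k y = ((y k : ℝ) : ℂ) := rfl

lemma zeta_single (k i : Fin n) :
    zeta k (EuclideanSpace.single i (1:ℝ)) = if i = k then 1 else 0 := by
  simp [zeta, EuclideanSpace.single_apply, eq_comm]
  split <;> simp

lemma lap_sum {ι : Type*} (t : Finset ι) (F : ι → E n → ℂ) (hs : IsOpen s)
    (hF : ∀ k ∈ t, ContDiffOn ℝ (⊤:ℕ∞) (F k) s) (hx : x ∈ s) :
    lap (fun y => ∑ k ∈ t, F k y) x = ∑ k ∈ t, lap (F k) x := by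
  classical
  induction t using Finset.induction with
  | empty =>
    simp only [Finset.sum_empty]
    exact lap_zero_fun
  | @insert a t ha ih =>
    simp only [Finset.sum_insert ha]
    rw [lap_add hs (hF a (Finset.mem_insert_self a t))
      (ContDiffOn.sum fun k hk => hF k (Finset.mem_insert_of_mem hk)) hx,
      ih fun k hk => hF k (Finset.mem_insert_of_mem hk)]

/-- Second derivative symmetry. -/
lemma pd_symm (hs : IsOpen s) (hf : ContDiffOn ℝ (⊤:ℕ∞) f s) (hx : x ∈ s) (v w : E n) :
    fderiv ℝ (fun y => fderiv ℝ f y v) x w = fderiv ℝ (fun y => fderiv ℝ f y w) x v := by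
  have hdf : ContDiffAt ℝ (⊤:ℕ∞) (fderiv ℝ f) x :=
    (hf.contDiffAt (hs.mem_nhds hx)).fderiv_right (by exact_mod_cast le_top)
  have hdfd : DifferentiableAt ℝ (fderiv ℝ f) x :=
    hdf.differentiableAt (by simp)
  have key : ∀ u : E n, fderiv ℝ (fun y => fderiv ℝ f y u) x
      = (fderiv ℝ (fderiv ℝ f) x).flip u := by
    intro u
    have := fderiv_clm_apply (x := x) (c := fderiv ℝ f) (u := fun _ => u) hdfd
      (differentiableAt_const u)
    simpa [fderiv_fun_const] using this
  rw [key v, key w]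
  have hev : ∀ᶠ y in nhds x, HasFDerivAt f (fderiv ℝ f y) y := by
    filter_upwards [hs.mem_nhds hx] with y hy using (diffAt hs hf hy).hasFDerivAt
  have sym := second_derivative_symmetric_of_eventually hev hdfd.hasFDerivAt w v
  simpa [ContinuousLinearMap.flip_apply] using sym

/-- `Δ` commutes with directional derivatives. -/
lemma lap_pd_comm (hs : IsOpen s) (hf : ContDiffOn ℝ (⊤:ℕ∞) f s) (hx : x ∈ s) (v : E n) :
    lap (fun y => fderiv ℝ f y v) x = fderiv ℝ (lap f) x v := by
  unfold lap
  have hrhs : fderiv ℝ (fun y => ∑ i : Fin n,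
      fderiv ℝ (fun z => fderiv ℝ f z (EuclideanSpace.single i 1)) y (EuclideanSpace.single i 1)) x v
      = ∑ i : Fin n, fderiv ℝ (fun y =>
        fderiv ℝ (fun z => fderiv ℝ f z (EuclideanSpace.single i 1)) y (EuclideanSpace.single i 1)) x v := by
    rw [fderiv_fun_sum fun i _ => pdiffAt hs (contDiffOn_pd hs hf _) hx _,
      ContinuousLinearMap.sum_apply]
  rw [hrhs]
  refine Finset.sum_congr rfl fun i _ => ?_
  set e := EuclideanSpace.single i (1:ℝ)
  have h1 : Set.EqOn (fun y => fderiv ℝ (fun z => fderiv ℝ f z v) y e)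
      (fun y => fderiv ℝ (fun z => fderiv ℝ f z e) y v) s :=
    fun y hy => pd_symm hs hf hy v e
  rw [(eventuallyEq_of_eqOn hs h1 hx).fderiv_eq]
  exact pd_symm hs (contDiffOn_pd hs hf e) hx v e

end S8

namespace S8

variable {n : ℕ} {s : Set (E n)} {f g p : E n → ℂ} {x : E n}

/-- The weight `1 - |x|²` as a complex-valued function. -/
def qC (n : ℕ) : E n → ℂ := fun y => 1 - ∑ k, zeta k y * zeta k y

lemma qC_eq (y : E n) : qC n y = ((1 - ‖y‖ ^ 2 : ℝ) : ℂ) := by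
  have hnorm : ‖y‖ ^ 2 = ∑ k, y k ^ 2 := by
    rw [EuclideanSpace.norm_eq]
    rw [Real.sq_sqrt (Finset.sum_nonneg fun k _ => sq_nonneg _)]
    simp [Real.norm_eq_abs, sq_abs]
  simp only [qC, zeta_apply, hnorm]
  push_cast
  ring

lemma contDiff_qC : ContDiff ℝ (⊤:ℕ∞) (qC n) :=
  contDiff_const.sub (ContDiff.sum fun k _ =>
    ((zeta k).contDiff).mul ((zeta k).contDiff))

lemma hasFDerivAt_qC (y : E n) :
    HasFDerivAt (qC n) (-(∑ k : Fin n, (zeta k y • zeta k + zeta k y • zeta k))) y := by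
  apply HasFDerivAt.const_sub
  exact HasFDerivAt.fun_sum fun k _ => ((zeta k).hasFDerivAt (x := y)).mul ((zeta k).hasFDerivAt)

lemma pd_qC (i : Fin n) (y : E n) :
    fderiv ℝ (qC n) y (EuclideanSpace.single i 1) = -2 * ((y i : ℝ) : ℂ) := by
  rw [(hasFDerivAt_qC y).fderiv]
  simp only [ContinuousLinearMap.neg_apply, ContinuousLinearMap.sum_apply,
    ContinuousLinearMap.add_apply, ContinuousLinearMap.smul_apply, zeta_single, smul_eq_mul,
    mul_ite, mul_one, mul_zero, Finset.sum_add_distrib, Finset.sum_ite_eq', Finset.mem_univ,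
    if_true, zeta_apply]
  simp [EuclideanSpace.single_apply, apply_ite Complex.ofReal, mul_ite, mul_one, mul_zero,
    Finset.sum_ite_eq']
  ring

lemma pd_pd_qC (i : Fin n) (y : E n) :
    fderiv ℝ (fun z => fderiv ℝ (qC n) z (EuclideanSpace.single i 1)) y
      (EuclideanSpace.single i 1) = -2 := by
  have h1 : (fun z : E n => fderiv ℝ (qC n) z (EuclideanSpace.single i 1))
      = fun z => -2 * zeta i z := by
    funext z; rw [pd_qC]; rfl
  rw [h1]
  have h2 : HasFDerivAt (fun z : E n => -2 * zeta i z) ((-2 : ℂ) • (zeta i : E n →L[ℝ] ℂ)) y := by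
    exact ((zeta i).hasFDerivAt (x := y)).const_mul (-2)
  rw [h2.fderiv]
  simp [zeta_single]

lemma lap_qC (y : E n) : lap (qC n) y = -2 * n := by
  unfold lap
  rw [Finset.sum_congr rfl (fun i _ => pd_pd_qC i y), Finset.sum_const, Finset.card_univ]
  simp
  ring

/-- Identity (I): `Δ((1-|x|²)v) = (1-|x|²)Δv - 4Rv - 2n v`. -/
lemma lap_weight_mul (hs : IsOpen s) (hf : ContDiffOn ℝ (⊤:ℕ∞) f s) (hx : x ∈ s) :
    lap (fun y => qC n y * f y) x
      = qC n x * lap f x - 4 * radialDeriv f x - 2 * n * f x := by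
  rw [lap_mul hs (contDiff_qC.contDiffOn) hf hx]
  have hcross : ∑ i, fderiv ℝ (qC n) x (EuclideanSpace.single i 1)
      * fderiv ℝ f x (EuclideanSpace.single i 1) = -2 * radialDeriv f x := by
    rw [radial_eq_sum, Finset.mul_sum]
    refine Finset.sum_congr rfl fun i _ => ?_
    rw [pd_qC]
    ring
  rw [hcross, lap_qC]
  ring

/-- Identity (II): `Δ(Rv) = R(Δv) + 2Δv`. -/
lemma lap_radial_comm (hs : IsOpen s) (hf : ContDiffOn ℝ (⊤:ℕ∞) f s) (hx : x ∈ s) :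
    lap (radialDeriv f) x = radialDeriv (lap f) x + 2 * lap f x := by
  have hrd : radialDeriv f = fun y => ∑ k, zeta k y *
      fderiv ℝ f y (EuclideanSpace.single k 1) := by
    funext y; exact radial_eq_sum f y
  rw [hrd]
  rw [lap_sum Finset.univ _ hs
    (fun k _ => ((zeta k).contDiff.contDiffOn (n := (⊤:ℕ∞))).mul (contDiffOn_pd hs hf _)) hx]
  have hterm : ∀ k : Fin n, lap (fun y => zeta k y *
      fderiv ℝ f y (EuclideanSpace.single k 1)) x
      = zeta k x * lap (fun y => fderiv ℝ f y (EuclideanSpace.single k 1)) x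
        + 2 * fderiv ℝ (fun y => fderiv ℝ f y (EuclideanSpace.single k 1)) x
            (EuclideanSpace.single k 1) := by
    intro k
    set g : E n → ℂ := fun y => fderiv ℝ f y (EuclideanSpace.single k 1) with hg
    rw [lap_mul hs ((zeta k).contDiff.contDiffOn (n := (⊤:ℕ∞))) (contDiffOn_pd hs hf _) hx]
    have hz : ∀ y : E n, fderiv ℝ (fun z : E n => zeta k z) y = zeta k := fun y => (zeta k).fderiv
    have hzlap : lap (fun y => zeta k y) x = 0 := by
      unfold lap
      refine Finset.sum_eq_zero fun i _ => ?_
      have h1 : (fun y : E n => fderiv ℝ (fun z : E n => zeta k z) y (EuclideanSpace.single i 1))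
          = fun _ => zeta k (EuclideanSpace.single i 1) := by
        funext y
        rw [hz y]
      rw [h1, fderiv_const_apply]
      rfl
    have hcross : ∑ i, fderiv ℝ (fun y : E n => zeta k y) x (EuclideanSpace.single i 1)
        * fderiv ℝ g x (EuclideanSpace.single i 1)
        = fderiv ℝ g x (EuclideanSpace.single k 1) := by
      have h2 : ∀ i : Fin n, fderiv ℝ (fun y : E n => zeta k y) x (EuclideanSpace.single i 1)
          * fderiv ℝ g x (EuclideanSpace.single i 1)
          = if i = k then fderiv ℝ g x (EuclideanSpace.single i 1) else 0 := by
        intro i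
        rw [hz x, zeta_single, ite_mul, one_mul, zero_mul]
      rw [Finset.sum_congr rfl fun i _ => h2 i, Finset.sum_ite_eq' Finset.univ k
        (fun i => fderiv ℝ g x (EuclideanSpace.single i 1))]
      simp
    rw [hzlap, hcross]
    ring
  rw [Finset.sum_congr rfl fun k _ => hterm k]
  rw [Finset.sum_add_distrib]
  congr 1
  · rw [radial_eq_sum]
    refine Finset.sum_congr rfl fun k _ => ?_
    rw [lap_pd_comm hs hf hx]
    rfl
  · rw [← Finset.mul_sum]
    rfl

end S8

namespace S8

variable {n : ℕ} {s : Set (E n)} {f g u : E n → ℂ} {x : E n}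

lemma lapIter_succ' (m : ℕ) (f : E n → ℂ) : lapIter (m+1) f = lapIter m (lap f) :=
  Function.iterate_succ_apply lap m f

lemma lapIter_eqOn (hs : IsOpen s) (m : ℕ) (h : Set.EqOn f g s) :
    Set.EqOn (lapIter m f) (lapIter m g) s := by
  induction m generalizing f g with
  | zero => exact h
  | succ m ih =>
    rw [lapIter_succ', lapIter_succ']
    exact ih (lap_eqOn hs h)

lemma contDiffOn_lapIter (hs : IsOpen s) (hf : ContDiffOn ℝ (⊤:ℕ∞) f s) (m : ℕ) :
    ContDiffOn ℝ (⊤:ℕ∞) (lapIter m f) s := by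
  induction m generalizing f with
  | zero => exact hf
  | succ m ih =>
    rw [lapIter_succ']
    exact ih (contDiffOn_lap hs hf)

lemma lapIter_zero_fun (m : ℕ) (x : E n) : lapIter m (fun _ : E n => (0:ℂ)) x = 0 := by
  induction m with
  | zero => rfl
  | succ m ih =>
    rw [lapIter_succ']
    have h0 : lap (fun _ : E n => (0:ℂ)) = fun _ : E n => (0:ℂ) :=
      funext fun y => lap_zero_fun
    rw [h0]
    exact ih

lemma lapIter_zero_on (hs : IsOpen s) (m : ℕ) (h : ∀ y ∈ s, f y = 0) :
    ∀ y ∈ s, lapIter m f y = 0 := by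
  intro y hy
  rw [lapIter_eqOn hs m (fun z hz => h z hz) hy]
  exact lapIter_zero_fun m y

lemma lapIter_add (hs : IsOpen s) (m : ℕ) (hf : ContDiffOn ℝ (⊤:ℕ∞) f s)
    (hg : ContDiffOn ℝ (⊤:ℕ∞) g s) :
    ∀ x ∈ s, lapIter m (fun y => f y + g y) x = lapIter m f x + lapIter m g x := by
  induction m generalizing f g with
  | zero => intro x _; rfl
  | succ m ih =>
    intro x hx
    rw [lapIter_succ', lapIter_succ', lapIter_succ']
    rw [lapIter_eqOn hs m (fun z hz => lap_add hs hf hg hz) hx]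
    exact ih (contDiffOn_lap hs hf) (contDiffOn_lap hs hg) x hx

lemma lapIter_const_mul (hs : IsOpen s) (m : ℕ) (hf : ContDiffOn ℝ (⊤:ℕ∞) f s) (c : ℂ) :
    ∀ x ∈ s, lapIter m (fun y => c * f y) x = c * lapIter m f x := by
  induction m generalizing f with
  | zero => intro x _; rfl
  | succ m ih =>
    intro x hx
    rw [lapIter_succ', lapIter_succ']
    rw [lapIter_eqOn hs m (fun z hz => lap_const_mul hs hf hz c) hx]
    exact ih (contDiffOn_lap hs hf) x hx

lemma contDiffOn_cmul (hf : ContDiffOn ℝ (⊤:ℕ∞) f s) (c : ℂ) :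
    ContDiffOn ℝ (⊤:ℕ∞) (fun y => c * f y) s :=
  contDiffOn_const.mul hf

lemma radial_kill (hs : IsOpen s) (m : ℕ) (hf : ContDiffOn ℝ (⊤:ℕ∞) f s)
    (h : ∀ x ∈ s, lapIter m f x = 0) :
    ∀ x ∈ s, lapIter m (radialDeriv f) x = 0 := by
  induction m generalizing f with
  | zero =>
    intro x hx
    have h0 : Set.EqOn f (fun _ => (0:ℂ)) s := fun z hz => h z hz
    show radialDeriv f x = 0
    unfold radialDeriv
    rw [(eventuallyEq_of_eqOn hs h0 hx).fderiv_eq, fderiv_const_apply]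
    rfl
  | succ m ih =>
    intro x hx
    rw [lapIter_succ']
    have heq : Set.EqOn (lap (radialDeriv f))
        (fun z => radialDeriv (lap f) z + 2 * lap f z) s :=
      fun z hz => lap_radial_comm hs hf hz
    rw [lapIter_eqOn hs m heq hx]
    have h' : ∀ x ∈ s, lapIter m (lap f) x = 0 := by
      intro z hz
      have := h z hz
      rwa [lapIter_succ'] at this
    rw [lapIter_add hs m (contDiffOn_radial hs (contDiffOn_lap hs hf))
      (contDiffOn_cmul (contDiffOn_lap hs hf) 2) x hx,
      lapIter_const_mul hs m (contDiffOn_lap hs hf) 2 x hx,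
      ih (contDiffOn_lap hs hf) h' x hx, h' x hx]
    ring

lemma poly_step (hs : IsOpen s) (m : ℕ) (hf : ContDiffOn ℝ (⊤:ℕ∞) f s)
    (h : ∀ x ∈ s, lapIter m f x = 0) :
    ∀ x ∈ s, lapIter (m+1) (fun y => qC n y * f y) x = 0 := by
  induction m generalizing f with
  | zero =>
    apply lapIter_zero_on hs
    intro y hy
    have h0 : f y = 0 := h y hy
    rw [h0, mul_zero]
  | succ m ih =>
    intro x hx
    rw [lapIter_succ']
    have heq : Set.EqOn (lap (fun y => qC n y * f y))
        (fun y => qC n y * lap f y + ((-4) * radialDeriv f y + (-2*(n:ℂ)) * f y)) s := by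
      intro z hz
      rw [lap_weight_mul hs hf hz]
      ring
    rw [lapIter_eqOn hs (m+1) heq hx]
    have hsm1 : ContDiffOn ℝ (⊤:ℕ∞) (fun y => qC n y * lap f y) s :=
      (contDiff_qC.contDiffOn).mul (contDiffOn_lap hs hf)
    have hsm2 : ContDiffOn ℝ (⊤:ℕ∞) (fun y => (-4:ℂ) * radialDeriv f y) s :=
      contDiffOn_cmul (contDiffOn_radial hs hf) (-4:ℂ)
    have hsm3 : ContDiffOn ℝ (⊤:ℕ∞) (fun y => (-2*(n:ℂ)) * f y) s :=
      contDiffOn_cmul hf (-2*(n:ℂ))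
    rw [lapIter_add hs (m+1) hsm1 (hsm2.add hsm3) x hx,
      lapIter_add hs (m+1) hsm2 hsm3 x hx,
      lapIter_const_mul hs (m+1) (contDiffOn_radial hs hf) (-4) x hx,
      lapIter_const_mul hs (m+1) hf (-2*(n:ℂ)) x hx]
    have h' : ∀ x ∈ s, lapIter m (lap f) x = 0 := by
      intro z hz
      have := h z hz
      rwa [lapIter_succ'] at this
    rw [ih (contDiffOn_lap hs hf) h' x hx,
      radial_kill hs (m+1) hf h x hx, h x hx]
    ring

end S8

namespace S8

variable {n : ℕ} {s : Set (E n)} {f g u : E n → ℂ} {x : E n}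

lemma lop_eq (θ : ℝ) (f : E n → ℂ) :
    Lop θ f = fun y => qC n y * lap f y + ((4*θ:ℝ):ℂ) * radialDeriv f y
      + ((2*θ*((n:ℝ)-2-2*θ):ℝ):ℂ) * f y := by
  funext y
  rw [Lop, qC_eq]

lemma lap_Lop (hs : IsOpen s) (hf : ContDiffOn ℝ (⊤:ℕ∞) f s) (hx : x ∈ s) (θ : ℝ) :
    lap (Lop θ f) x = Lop (θ-1) (lap f) x := by
  rw [lop_eq θ f]
  have hlf := contDiffOn_lap hs hf
  have hsm1 : ContDiffOn ℝ (⊤:ℕ∞) (fun y => qC n y * lap f y) s :=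
    (contDiff_qC.contDiffOn).mul hlf
  have hsm2 : ContDiffOn ℝ (⊤:ℕ∞) (fun y => ((4*θ:ℝ):ℂ) * radialDeriv f y) s :=
    contDiffOn_cmul (contDiffOn_radial hs hf) _
  have hsm3 : ContDiffOn ℝ (⊤:ℕ∞) (fun y => ((2*θ*((n:ℝ)-2-2*θ):ℝ):ℂ) * f y) s :=
    contDiffOn_cmul hf _
  rw [lap_add hs (hsm1.add hsm2) hsm3 hx, lap_add hs hsm1 hsm2 hx,
    lap_const_mul hs (contDiffOn_radial hs hf) hx, lap_const_mul hs hf hx,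
    lap_weight_mul hs hlf hx, lap_radial_comm hs hf hx]
  rw [lop_eq (θ-1) (lap f)]
  simp only
  push_cast
  ring

lemma kernel_polyharm (hs : IsOpen s) (hq : ∀ x ∈ s, (1:ℝ) - ‖x‖^2 ≠ 0) (t : ℕ)
    (hf : ContDiffOn ℝ (⊤:ℕ∞) f s) (h : ∀ x ∈ s, Lop (t:ℝ) f x = 0) :
    ∀ x ∈ s, lapIter (t+1) f x = 0 := by
  induction t generalizing f with
  | zero =>
    intro x hx
    have h0 := h x hx
    rw [Lop] at h0
    simp only [Nat.cast_zero, mul_zero, zero_mul, Complex.ofReal_zero, add_zero] at h0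
    have hq' : ((1 - ‖x‖^2 : ℝ):ℂ) ≠ 0 := by
      exact_mod_cast Complex.ofReal_ne_zero.2 (hq x hx)
    show lap f x = 0
    exact (mul_eq_zero.1 h0).resolve_left hq'
  | succ t ih =>
    intro x hx
    rw [lapIter_succ']
    apply ih (contDiffOn_lap hs hf) _ x hx
    intro z hz
    have h1 : lap (Lop ((t+1:ℕ):ℝ) f) z = 0 := by
      apply lap_zero_on hs _ z hz
      intro w hw
      exact h w hw
    rw [lap_Lop hs hf hz ((t+1:ℕ):ℝ)] at h1
    have hc : ((t+1:ℕ):ℝ) - 1 = (t:ℝ) := by push_cast; ring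
    rwa [hc] at h1

lemma Mnat_poly (k : ℕ) (u : E n → ℂ) : Mnat k u = fun y => (qC n y)^k * u y := by
  funext y
  rw [Mnat, qC_eq]
  push_cast
  ring

lemma contDiffOn_Mnat (hs : IsOpen s) (hu : ContDiffOn ℝ (⊤:ℕ∞) u s) (k : ℕ) :
    ContDiffOn ℝ (⊤:ℕ∞) (Mnat k u) s := by
  rw [Mnat_poly]
  exact ((contDiff_qC.contDiffOn).pow k).mul hu

lemma Mnat_succ (k : ℕ) (u : E n → ℂ) :
    Mnat (k+1) u = fun y => qC n y * Mnat k u y := by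
  rw [Mnat_poly, Mnat_poly]
  funext y
  rw [pow_succ]
  ring

lemma poly_iter (hs : IsOpen s) (hu : ContDiffOn ℝ (⊤:ℕ∞) u s) (k m : ℕ)
    (h : ∀ x ∈ s, lapIter m u x = 0) :
    ∀ x ∈ s, lapIter (m+k) (Mnat k u) x = 0 := by
  induction k with
  | zero =>
    intro x hx
    have h0 : Mnat 0 u = u := by
      rw [Mnat_poly]
      funext y
      rw [pow_zero, one_mul]
    rw [h0]
    exact h x hx
  | succ k ih =>
    intro x hx
    rw [Mnat_succ]
    have := poly_step hs (m+k) (contDiffOn_Mnat hs hu k) ih x hx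
    rwa [show m+(k+1) = m+k+1 by ring]

end S8

end

/-- smooth solutions of `L_{N-j-1}[u] = 0` give `N`-harmonic `M^j[u]`. -/
theorem stmt8 (n N j : ℕ) (hn : 2 ≤ n) (hN : 1 ≤ N) (hj : j < N)
    (u : E n → ℂ) (hu : ContDiffOn ℝ (⊤ : ℕ∞) u (unitBall n))
    (hL : ∀ x ∈ unitBall n, Lop ((N : ℝ) - (j : ℝ) - 1) u x = 0) :
    NHarm n N (Mnat j u) ∧ ∀ x ∈ unitBall n, lapIter N (Mnat j u) x = 0 := by
  classical
  have hs : IsOpen (unitBall n) := Metric.isOpen_ball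
  have hu' : ContDiffOn ℝ (⊤:ℕ∞) u (unitBall n) := hu.of_le (by simp)
  have hq : ∀ x ∈ unitBall n, (1:ℝ) - ‖x‖^2 ≠ 0 := by
    intro x hx
    have hxlt : ‖x‖ < 1 := by
      simpa [unitBall, Metric.mem_ball] using hx
    have : ‖x‖^2 < 1 := by
      nlinarith [norm_nonneg x]
    linarith
  set t : ℕ := N - 1 - j with ht
  have htc : ((t:ℕ):ℝ) = (N:ℝ) - (j:ℝ) - 1 := by
    rw [ht, Nat.sub_sub, Nat.cast_sub (by omega : 1 + j ≤ N)]
    push_cast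
    ring
  have hL' : ∀ x ∈ unitBall n, Lop ((t:ℕ):ℝ) u x = 0 := by
    intro x hx
    rw [htc]
    exact hL x hx
  have h1 : ∀ x ∈ unitBall n, lapIter (t+1) u x = 0 :=
    S8.kernel_polyharm hs hq t hu' hL'
  have h2 : ∀ x ∈ unitBall n, lapIter (t+1+j) (Mnat j u) x = 0 :=
    S8.poly_iter hs hu' j (t+1) h1
  have hNt : t + 1 + j = N := by omega
  rw [hNt] at h2
  have hsm : ContDiffOn ℝ ((2*N : ℕ) : WithTop ℕ∞) (Mnat j u) (unitBall n) :=
    (S8.contDiffOn_Mnat hs hu' j).of_le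
      (le_trans (WithTop.coe_le_coe.2 le_top) le_rfl)
  exact ⟨⟨hsm, h2⟩, h2⟩
end

section
/- Let n ≥ 2 and θ ∈ ℝ. The function Φ_θ, defined on 𝔹 by the power series Φ_θ(x) := ∑_{k=0}^∞ [(-θ)_k (n/2-1-θ)_k / ((n/2)_k (1)_k)] |x|^{2k} (which converges for |x| < 1), satisfies L_θ[Φ_θ] = 0 on 𝔹. -/
open MeasureTheory
open scoped BigOperators ENNReal Classical

/-- The radial hypergeometric function
`Φ_θ(x) = ₂F₁(-θ, n/2-1-θ; n/2; |x|²)`, given by its power series. -/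
noncomputable def Phi (n : ℕ) (θ : ℝ) (x : E n) : ℝ :=
  ∑' k : ℕ,
    ((ascPochhammer ℝ k).eval (-θ) * (ascPochhammer ℝ k).eval ((n : ℝ) / 2 - 1 - θ)) /
        ((ascPochhammer ℝ k).eval ((n : ℝ) / 2) * (ascPochhammer ℝ k).eval 1) *
      ‖x‖ ^ (2 * k)

/-!
Write `Φ_θ(x) = f(|x|²)` with `f = ₂F₁(a, b; c; ·)`, `a = -θ`, `b = n/2 - 1 - θ`, `c = n/2`.
For a radial function `u(x) = g(|x|²)` one has `Δu = 2n g'(t) + 4t g''(t)` and `R[u] = 2t g'(t)`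
at `t = |x|²`, so `L_θ[u] = 4 (t(1-t) g'' + (c - (a+b+1)t) g' - ab g)`: on radial functions `L_θ`
is four times the hypergeometric operator. Differentiating the series of `f` termwise inside its
radius of convergence `1`, the hypergeometric equation for `f` reduces coefficientwise to the
recurrence `(k+1)(k+c) γ_{k+1} = (k+a)(k+b) γ_k` of its coefficients.
-/

open Filter Topology

noncomputable def derivCoeffs (a : ℕ → ℝ) (k : ℕ) : ℝ := ((k + 1 : ℕ) : ℝ) * a (k + 1)

def OneLeRadius (a : ℕ → ℝ) : Prop :=
  ∀ r : ℝ, 0 ≤ r → r < 1 → Summable fun k => |a k| * r ^ k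

namespace OneLeRadius

variable {a : ℕ → ℝ}

lemma summable (ha : OneLeRadius a) {t : ℝ} (ht : |t| < 1) : Summable fun k => a k * t ^ k :=
  .of_norm_bounded (ha |t| (abs_nonneg t) ht) fun k => by
    rw [Real.norm_eq_abs, abs_mul, abs_pow]

lemma derivCoeffs (ha : OneLeRadius a) : OneLeRadius (derivCoeffs a) := by
  intro r hr0 hr1
  obtain ⟨s, hrs, hs1⟩ := exists_between hr1
  have hs0 : 0 < s := hr0.trans_lt hrs
  -- `(k + 1) (r / s) ^ k → 0`, so eventually `(k + 1) r ^ k ≤ s ^ k`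
  have hq : |r / s| < 1 := by rw [abs_of_nonneg (by positivity), div_lt_one hs0]; exact hrs
  have hlim : Tendsto (fun k : ℕ => ((k : ℝ) + 1) * (r / s) ^ k) atTop (𝓝 0) := by
    simpa [add_mul] using (tendsto_self_mul_const_pow_of_abs_lt_one hq).add
      (tendsto_pow_atTop_nhds_zero_of_abs_lt_one hq)
  have hsum : Summable fun k => s⁻¹ * (|a (k + 1)| * s ^ (k + 1)) :=
    ((summable_nat_add_iff 1).2 (ha s hs0.le hs1)).mul_left _
  refine hsum.of_norm_bounded_eventually_nat ?_
  filter_upwards [hlim.eventually_le_const one_pos] with k hk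
  have hk' : ((k : ℝ) + 1) * r ^ k ≤ s ^ k := by
    rwa [div_pow, ← mul_div_assoc, div_le_one (by positivity)] at hk
  rw [Real.norm_eq_abs, abs_of_nonneg (by positivity), _root_.derivCoeffs, abs_mul, pow_succ]
  push_cast
  rw [abs_of_nonneg (by positivity : (0 : ℝ) ≤ (k : ℝ) + 1), inv_mul_eq_div]
  calc ((k : ℝ) + 1) * |a (k + 1)| * r ^ k = |a (k + 1)| * (((k : ℝ) + 1) * r ^ k) := by ring
    _ ≤ |a (k + 1)| * s ^ k := by gcongr
    _ = |a (k + 1)| * (s ^ k * s) / s := by field_simp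

lemma of_succ_eq_mul {q : ℕ → ℝ} (hq : Tendsto q atTop (𝓝 1))
    (ha : ∀ k, a (k + 1) = q k * a k) : OneLeRadius a := by
  intro r hr0 hr1
  obtain ⟨l, hrl, hl1⟩ := exists_between hr1
  refine summable_of_ratio_norm_eventually_le hl1 ?_
  have hlim : Tendsto (fun k => |q k| * r) atTop (𝓝 r) := by
    simpa using hq.abs.mul_const r
  filter_upwards [hlim.eventually_le_const hrl] with k hk
  simp only [norm_mul, norm_pow, Real.norm_eq_abs, abs_abs, abs_of_nonneg hr0]
  rw [ha, abs_mul, pow_succ]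
  calc |q k| * |a k| * (r ^ k * r) = (|q k| * r) * (|a k| * r ^ k) := by ring
    _ ≤ l * (|a k| * r ^ k) := by gcongr

end OneLeRadius

lemma hasDerivAt_tsum_mul_pow {a : ℕ → ℝ} (ha : OneLeRadius a) {t : ℝ} (ht : |t| < 1) :
    HasDerivAt (fun s => ∑' k, a k * s ^ k) (∑' k, derivCoeffs a k * t ^ k) t := by
  obtain ⟨r, htr, hr1⟩ := exists_between ht
  have hball : t ∈ Metric.ball (0 : ℝ) r := mem_ball_zero_iff.2 htr
  have htail : HasDerivAt (fun s => ∑' k, a (k + 1) * s ^ (k + 1))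
      (∑' k, derivCoeffs a k * t ^ k) t := by
    refine hasDerivAt_tsum_of_isPreconnected (g := fun k s => a (k + 1) * s ^ (k + 1))
      (g' := fun k s => derivCoeffs a k * s ^ k)
      (ha.derivCoeffs r ((abs_nonneg t).trans htr.le) hr1) Metric.isOpen_ball
      (convex_ball 0 r).isPreconnected (fun k y _ => ?_) (fun k y hy => ?_) hball
      ((summable_nat_add_iff 1 (f := fun k => a k * t ^ k)).2 (ha.summable ht)) hball
    · have h := (hasDerivAt_pow (k + 1) y).const_mul (a (k + 1))
      rwa [Nat.add_sub_cancel, mul_left_comm, ← mul_assoc] at h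
    · rw [norm_mul, norm_pow, Real.norm_eq_abs, Real.norm_eq_abs]
      gcongr
      exact (mem_ball_zero_iff.1 hy).le
  refine (htail.const_add (a 0)).congr_of_eventuallyEq ?_
  filter_upwards [Metric.isOpen_ball.mem_nhds (mem_ball_zero_iff.2 ht)] with s hs
  simpa using (ha.summable (mem_ball_zero_iff.1 hs)).tsum_eq_zero_add

lemma hasSum_mul_pow_of_hasSum_succ {g : ℕ → ℝ} {t S : ℝ}
    (h : HasSum (fun k => g (k + 1) * t ^ k) S) : HasSum (fun k => g k * t ^ k) (g 0 + t * S) := by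
  have hshift : HasSum (fun k => g (k + 1) * t ^ (k + 1)) (t * S) :=
    (h.mul_left t).congr_fun fun k => by ring
  simpa [add_comm] using (hasSum_nat_add_iff 1 (f := fun k => g k * t ^ k)).1 hshift

theorem hypergeometric_ode {a b c : ℝ} {γ : ℕ → ℝ} (hγ : OneLeRadius γ)
    (hrec : ∀ k : ℕ, ((k : ℝ) + 1) * (k + c) * γ (k + 1) = (k + a) * (k + b) * γ k)
    {t : ℝ} (ht : |t| < 1) :
    t * (1 - t) * ∑' k, derivCoeffs (derivCoeffs γ) k * t ^ k
      + (c - (a + b + 1) * t) * ∑' k, derivCoeffs γ k * t ^ k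
      - a * b * ∑' k, γ k * t ^ k = 0 := by
  set F₀ := ∑' k, γ k * t ^ k
  set F₁ := ∑' k, derivCoeffs γ k * t ^ k
  set F₂ := ∑' k, derivCoeffs (derivCoeffs γ) k * t ^ k
  have h₀ : HasSum (fun k => γ k * t ^ k) F₀ := (hγ.summable ht).hasSum
  have h₁ : HasSum (fun k => derivCoeffs γ k * t ^ k) F₁ :=
    (hγ.derivCoeffs.summable ht).hasSum
  have h₂ : HasSum (fun k => derivCoeffs (derivCoeffs γ) k * t ^ k) F₂ :=
    (hγ.derivCoeffs.derivCoeffs.summable ht).hasSum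
  have hEuler : HasSum (fun k : ℕ => (k : ℝ) * derivCoeffs γ k * t ^ k) (t * F₂) := by
    simpa using hasSum_mul_pow_of_hasSum_succ (g := fun k => (k : ℝ) * derivCoeffs γ k) h₂
  have hF₂F₁ (e : ℝ) :
      HasSum (fun k : ℕ => ((k : ℝ) + e) * derivCoeffs γ k * t ^ k) (t * F₂ + e * F₁) :=
    (hEuler.add (h₁.mul_left e)).congr_fun fun k => by ring
  have htF₂F₁ : HasSum (fun k : ℕ => ((k : ℝ) + a + b) * k * γ k * t ^ k)
      (t * (t * F₂ + (a + b + 1) * F₁)) := by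
    have hsucc : HasSum
        (fun k : ℕ => (((k + 1 : ℕ) : ℝ) + a + b) * (k + 1 : ℕ) * γ (k + 1) * t ^ k)
        (t * F₂ + (a + b + 1) * F₁) := by
      refine (hF₂F₁ (a + b + 1)).congr_fun fun k => ?_
      simp only [derivCoeffs]
      push_cast
      ring
    simpa using
      hasSum_mul_pow_of_hasSum_succ (g := fun k : ℕ => ((k : ℝ) + a + b) * k * γ k) hsucc
  have hzero := (hF₂F₁ c).sub (htF₂F₁.add (h₀.mul_left (a * b)))
  have hterms : (fun k : ℕ => ((k : ℝ) + c) * derivCoeffs γ k * t ^ k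
      - (((k : ℝ) + a + b) * k * γ k * t ^ k + a * b * (γ k * t ^ k))) = 0 := by
    funext k
    simp only [derivCoeffs, Pi.zero_apply]
    push_cast
    linear_combination t ^ k * hrec k
  rw [hterms] at hzero
  linear_combination hzero.unique hasSum_zero

noncomputable def hypergeomCoeff (a b c : ℝ) (k : ℕ) : ℝ :=
  (ascPochhammer ℝ k).eval a * (ascPochhammer ℝ k).eval b /
    ((ascPochhammer ℝ k).eval c * (ascPochhammer ℝ k).eval 1)

section Hypergeometric

variable {a b c : ℝ}

lemma hypergeomCoeff_succ (hc : 0 < c) (k : ℕ) :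
    hypergeomCoeff a b c (k + 1)
      = (a + k) / (1 + k) * ((b + k) / (c + k)) * hypergeomCoeff a b c k := by
  have h₁ := ascPochhammer_pos k c hc
  have h₂ := ascPochhammer_pos k (1 : ℝ) one_pos
  simp only [hypergeomCoeff, ascPochhammer_succ_eval]
  field_simp

lemma hypergeomCoeff_recurrence (hc : 0 < c) (k : ℕ) :
    ((k : ℝ) + 1) * (k + c) * hypergeomCoeff a b c (k + 1)
      = (k + a) * (k + b) * hypergeomCoeff a b c k := by
  rw [hypergeomCoeff_succ hc]
  field_simp
  ring

lemma oneLeRadius_hypergeomCoeff (hc : 0 < c) : OneLeRadius (hypergeomCoeff a b c) := by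
  refine .of_succ_eq_mul ?_ (hypergeomCoeff_succ hc)
  simpa using (tendsto_add_mul_div_add_mul_atTop_nhds a 1 1 one_ne_zero).mul
    (tendsto_add_mul_div_add_mul_atTop_nhds b c 1 one_ne_zero)

end Hypergeometric

section Radial

variable {n : ℕ} {g : ℝ → ℝ} {x : E n}

lemma hasFDerivAt_ofReal_comp_norm_sq {d : ℝ} (h : HasDerivAt g d (‖x‖ ^ 2)) :
    HasFDerivAt (fun y : E n => (g (‖y‖ ^ 2) : ℂ))
      (Complex.ofRealCLM.comp (d • 2 • innerSL ℝ x)) x :=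
  Complex.ofRealCLM.hasFDerivAt.comp x
    (h.comp_hasFDerivAt x (hasStrictFDerivAt_norm_sq x).hasFDerivAt)

lemma radialDeriv_comp_norm_sq {d : ℝ} (h : HasDerivAt g d (‖x‖ ^ 2)) :
    radialDeriv (fun y : E n => (g (‖y‖ ^ 2) : ℂ)) x = ((2 * ‖x‖ ^ 2 * d : ℝ) : ℂ) := by
  rw [radialDeriv, (hasFDerivAt_ofReal_comp_norm_sq h).fderiv]
  simp only [ContinuousLinearMap.comp_apply, smul_apply, coe_innerSL_apply,
    Complex.ofRealCLM_apply, smul_eq_mul, nsmul_eq_mul, real_inner_self_eq_norm_sq]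
  push_cast
  ring

lemma lap_comp_norm_sq {g' : ℝ → ℝ} {d : ℝ}
    (hg : ∀ᶠ s in 𝓝 (‖x‖ ^ 2), HasDerivAt g (g' s) s) (hg' : HasDerivAt g' d (‖x‖ ^ 2)) :
    lap (fun y : E n => (g (‖y‖ ^ 2) : ℂ)) x
      = ((2 * n * g' (‖x‖ ^ 2) + 4 * ‖x‖ ^ 2 * d : ℝ) : ℂ) := by
  have hnear : ∀ᶠ y in 𝓝 x, HasDerivAt g (g' (‖y‖ ^ 2)) (‖y‖ ^ 2) :=
    (continuous_norm.pow 2).continuousAt.eventually hg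
  have hcoord (i : Fin n) : HasFDerivAt (fun y : E n => ((2 * g' (‖y‖ ^ 2) * y i : ℝ) : ℂ))
      (Complex.ofRealCLM.comp ((2 * g' (‖x‖ ^ 2)) • EuclideanSpace.proj i
        + x i • ((2 : ℝ) • d • 2 • innerSL ℝ x))) x :=
    Complex.ofRealCLM.hasFDerivAt.comp x (((hg'.comp_hasFDerivAt x
      (hasStrictFDerivAt_norm_sq x).hasFDerivAt).const_mul 2).mul
      (EuclideanSpace.proj (𝕜 := ℝ) (ι := Fin n) i).hasFDerivAt)
  have hsecond (i : Fin n) :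
      fderiv ℝ (fun y => fderiv ℝ (fun y : E n => (g (‖y‖ ^ 2) : ℂ)) y
        (EuclideanSpace.single i 1)) x (EuclideanSpace.single i 1)
        = ((2 * g' (‖x‖ ^ 2) + 4 * d * x i ^ 2 : ℝ) : ℂ) := by
    have hfirst : (fun y => fderiv ℝ (fun y : E n => (g (‖y‖ ^ 2) : ℂ)) y
        (EuclideanSpace.single i 1))
        =ᶠ[𝓝 x] fun y : E n => ((2 * g' (‖y‖ ^ 2) * y i : ℝ) : ℂ) := by
      filter_upwards [hnear] with y hy
      rw [(hasFDerivAt_ofReal_comp_norm_sq hy).fderiv]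
      simp only [ContinuousLinearMap.comp_apply, smul_apply, coe_innerSL_apply,
        Complex.ofRealCLM_apply, smul_eq_mul, nsmul_eq_mul,
        EuclideanSpace.inner_single_right, conj_trivial]
      push_cast
      ring
    rw [hfirst.fderiv_eq, (hcoord i).fderiv]
    simp only [ContinuousLinearMap.comp_apply, smul_apply, coe_innerSL_apply,
      Complex.ofRealCLM_apply, smul_eq_mul, nsmul_eq_mul,
      add_apply, PiLp.proj_apply, PiLp.single_eq_same,
      EuclideanSpace.inner_single_right, conj_trivial]
    push_cast
    ring
  rw [lap, Finset.sum_congr rfl fun i _ => hsecond i, ← Complex.ofReal_sum]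
  congr 1
  rw [Finset.sum_add_distrib, ← Finset.mul_sum _ _ (4 * d), ← EuclideanSpace.real_norm_sq_eq]
  simp only [Finset.sum_const, Finset.card_univ, Fintype.card_fin, nsmul_eq_mul]
  ring

lemma Lop_comp_norm_sq (θ : ℝ) {g' : ℝ → ℝ} {d : ℝ}
    (hg : ∀ᶠ s in 𝓝 (‖x‖ ^ 2), HasDerivAt g (g' s) s) (hg' : HasDerivAt g' d (‖x‖ ^ 2)) :
    Lop θ (fun y : E n => (g (‖y‖ ^ 2) : ℂ)) x
      = ((4 * (‖x‖ ^ 2 * (1 - ‖x‖ ^ 2) * d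
          + (n / 2 - (n / 2 - 2 * θ) * ‖x‖ ^ 2) * g' (‖x‖ ^ 2)
          + θ * (n / 2 - 1 - θ) * g (‖x‖ ^ 2)) : ℝ) : ℂ) := by
  rw [Lop, lap_comp_norm_sq hg hg', radialDeriv_comp_norm_sq hg.self_of_nhds]
  push_cast
  ring

end Radial

/-- `Φ_θ` solves `L_θ[u] = 0` on the unit ball. -/
theorem stmt10 (n : ℕ) (hn : 2 ≤ n) (θ : ℝ) :
    ∀ x ∈ unitBall n, Lop θ (fun y => ((Phi n θ y : ℝ) : ℂ)) x = 0 := by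
  intro x hx
  set γ := hypergeomCoeff (-θ) ((n : ℝ) / 2 - 1 - θ) ((n : ℝ) / 2)
  have hc : (0 : ℝ) < n / 2 := by
    have : (2 : ℝ) ≤ n := by exact_mod_cast hn
    linarith
  have hγ : OneLeRadius γ := oneLeRadius_hypergeomCoeff hc
  have hPhi : (fun y => ((Phi n θ y : ℝ) : ℂ))
      = fun y : E n => ((∑' k, γ k * (‖y‖ ^ 2) ^ k : ℝ) : ℂ) := by
    simp only [Phi, pow_mul]
    rfl
  have ht : |‖x‖ ^ 2| < 1 := by
    rw [abs_of_nonneg (by positivity)]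
    exact pow_lt_one₀ (norm_nonneg x) (mem_ball_zero_iff.1 hx) two_ne_zero
  have hnear : ∀ᶠ s in 𝓝 (‖x‖ ^ 2),
      HasDerivAt (fun s => ∑' k, γ k * s ^ k) (∑' k, derivCoeffs γ k * s ^ k) s :=
    ((isOpen_lt continuous_abs continuous_const).eventually_mem ht).mono
      fun s hs => hasDerivAt_tsum_mul_pow hγ hs
  rw [hPhi, Lop_comp_norm_sq θ hnear (hasDerivAt_tsum_mul_pow hγ.derivCoeffs ht),
    Complex.ofReal_eq_zero]
  linear_combination 4 * hypergeometric_ode hγ (hypergeomCoeff_recurrence hc) ht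
end

section
/- Let n ≥ 2 and θ ∈ ℝ. The function Φ_θ(x) := ∑_{k=0}^∞ [(-θ)_k (n/2-1-θ)_k / ((n/2)_k (1)_k)] |x|^{2k} is bounded on 𝔹 if and only if θ > -1/2. -/
open MeasureTheory
open scoped BigOperators ENNReal Classical

/-!
The Taylor coefficients `c_k` of `Φ_θ(x) = ₂F₁(-θ, n/2-1-θ; n/2; |x|²)` satisfy
`c_{k+1} = c_k (k-θ)(k+n/2-1-θ)/((k+n/2)(k+1))`.

If `θ > -1/2`, this ratio is eventually at most `1 - (θ+3/2)/(k+1)`, so Raabe's test gives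
`∑ |c_k| < ∞`, and `|Φ_θ| ≤ ∑ |c_k|` on the ball.

If `θ ≤ -1/2`, all `c_k` are positive and `k c_k` is nondecreasing, so `c_k ≥ c_1 / k` and
`∑ c_k = ∞`. For nonnegative coefficients every partial sum `∑_{k<M} c_k` is a limit of values
`Φ_θ(x)` as `|x| → 1`, so `Φ_θ` is unbounded.
-/
open Filter Finset Topology

theorem ordinaryHypergeometricCoefficient_succ {𝕂 : Type*} [Field 𝕂] (a b c : 𝕂) (k : ℕ) :
    ordinaryHypergeometricCoefficient a b c (k + 1) =
      ordinaryHypergeometricCoefficient a b c k * ((a + k) * (b + k) / ((c + k) * (k + 1))) := by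
  simp only [ordinaryHypergeometricCoefficient, ascPochhammer_succ_eval, Nat.factorial_succ,
    Nat.cast_mul, mul_inv, div_eq_mul_inv]
  push_cast
  ring

theorem one_sub_div_le_rpow_div {s : ℝ} (hs : 1 ≤ s) (k : ℕ) :
    1 - s / (k + 1) ≤ ((k : ℝ) / (k + 1)) ^ s := by
  have hk : (0 : ℝ) < k + 1 := by positivity
  have hle : (-1 : ℝ) ≤ -(1 / (k + 1)) := by
    rw [neg_le_neg_iff, div_le_one hk]; linarith
  have hber := one_add_mul_self_le_rpow_one_add hle hs
  have hk' : (1 : ℝ) + -(1 / (k + 1)) = k / (k + 1) := by field_simp; ring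
  rw [hk'] at hber
  linarith [show s * -(1 / ((k : ℝ) + 1)) = -(s / (k + 1)) by ring]

/-- Raabe's test. -/
theorem summable_of_eventually_le_one_sub_div_mul {f : ℕ → ℝ} {s : ℝ} (hs : 1 < s)
    (hf : ∀ k, 0 ≤ f k) (h : ∀ᶠ k : ℕ in atTop, f (k + 1) ≤ (1 - s / (k + 1)) * f k) :
    Summable f := by
  obtain ⟨K, hK⟩ := (h.and (eventually_ge_atTop 1)).exists_forall_of_atTop
  have hdecr : ∀ k, K ≤ k → f k * (k : ℝ) ^ s ≤ f K * (K : ℝ) ^ s := by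
    intro k hk
    induction k, hk using Nat.le_induction with
    | base => rfl
    | succ k hk ih =>
      have hk0 : (0 : ℝ) < k := by exact_mod_cast (hK k hk).2
      refine le_trans ?_ ih
      calc f (k + 1) * ((k + 1 : ℕ) : ℝ) ^ s
          ≤ ((k : ℝ) / (k + 1)) ^ s * f k * ((k + 1 : ℕ) : ℝ) ^ s := by
            gcongr
            exact (hK k hk).1.trans (mul_le_mul_of_nonneg_right
              (one_sub_div_le_rpow_div hs.le k) (hf k))
        _ = f k * (k : ℝ) ^ s := by
            rw [Real.div_rpow hk0.le (by positivity)]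
            push_cast
            field_simp
  have hbound : ∀ᶠ k : ℕ in atTop, ‖f k‖ ≤ f K * (K : ℝ) ^ s * ((k : ℝ) ^ s)⁻¹ := by
    filter_upwards [eventually_ge_atTop K] with k hk
    have hk0 : (0 : ℝ) < k := by exact_mod_cast (hK K le_rfl).2.trans hk
    rw [Real.norm_of_nonneg (hf k), ← div_eq_mul_inv, le_div_iff₀ (by positivity)]
    exact hdecr k hk
  exact .of_norm_bounded_eventually_nat
    ((Real.summable_nat_rpow_inv.mpr hs).mul_left _) hbound

theorem not_summable_of_mul_le_succ_mul {f : ℕ → ℝ} (h1 : 0 < f 1)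
    (h : ∀ k : ℕ, k * f k ≤ (k + 1) * f (k + 1)) : ¬ Summable f := by
  have hlow : ∀ k : ℕ, f 1 ≤ (k + 1) * f (k + 1) := by
    intro k
    induction k with
    | zero => simp
    | succ k ih => exact ih.trans (by exact_mod_cast h (k + 1))
  intro hsum
  refine Real.not_summable_one_div_natCast ((summable_nat_add_iff 1).mp ?_)
  refine ((hsum.comp_injective (add_left_injective 1)).div_const (f 1)).of_nonneg_of_le
    (fun k => by positivity) (fun k => ?_)
  rw [Function.comp_apply, le_div_iff₀ h1]
  push_cast
  rw [one_div_mul_eq_div, div_le_iff₀ (by positivity)]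
  linarith [hlow k]

theorem summable_of_tsum_mul_pow_le {c : ℕ → ℝ} {C : ℝ} (hc : ∀ k, 0 ≤ c k)
    (hsum : ∀ t ∈ Set.Ico (0 : ℝ) 1, Summable fun k => c k * t ^ k)
    (hle : ∀ t ∈ Set.Ico (0 : ℝ) 1, ∑' k, c k * t ^ k ≤ C) : Summable c := by
  refine summable_of_sum_range_le (c := C) hc fun M => ?_
  have hlim : Tendsto (fun t : ℝ => ∑ k ∈ range M, c k * t ^ k) (𝓝[<] 1)
      (𝓝 (∑ k ∈ range M, c k)) := by
    have : Continuous fun t : ℝ => ∑ k ∈ range M, c k * t ^ k := by fun_prop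
    simpa using (this.tendsto 1).mono_left nhdsWithin_le_nhds
  refine le_of_tendsto hlim ?_
  filter_upwards [Ico_mem_nhdsLT (zero_lt_one : (0 : ℝ) < 1)] with t ht
  exact ((hsum t ht).sum_le_tsum _ (fun k _ => mul_nonneg (hc k) (pow_nonneg ht.1 k))).trans
    (hle t ht)

theorem abs_tsum_mul_pow_le_tsum_abs {c : ℕ → ℝ} (hc : Summable fun k => |c k|) {t : ℝ}
    (ht : |t| ≤ 1) : |∑' k, c k * t ^ k| ≤ ∑' k, |c k| := by
  have hb : ∀ k, ‖c k * t ^ k‖ ≤ |c k| := fun k => by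
    rw [Real.norm_eq_abs, abs_mul, abs_pow]
    exact mul_le_of_le_one_right (abs_nonneg _) (pow_le_one₀ (abs_nonneg t) ht)
  exact (norm_tsum_le_tsum_norm (hc.of_norm_bounded hb).norm).trans
    ((hc.of_norm_bounded hb).norm.tsum_le_tsum hb hc)

noncomputable abbrev phiCoeff (n : ℕ) (θ : ℝ) : ℕ → ℝ :=
  ordinaryHypergeometricCoefficient (-θ) ((n : ℝ) / 2 - 1 - θ) ((n : ℝ) / 2)

theorem Phi_eq_tsum (n : ℕ) (θ : ℝ) (x : E n) :
    Phi n θ x = ∑' k, phiCoeff n θ k * (‖x‖ ^ 2) ^ k := by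
  refine tsum_congr fun k => ?_
  rw [ascPochhammer_eval_one, ← pow_mul]
  ring

noncomputable def phiRatio (n : ℕ) (θ : ℝ) (k : ℕ) : ℝ :=
  (-θ + k) * ((n / 2 - 1 - θ : ℝ) + k) / ((n / 2 + k) * (k + 1))

section
variable {n : ℕ} {θ : ℝ}

theorem phiCoeff_succ (k : ℕ) : phiCoeff n θ (k + 1) = phiCoeff n θ k * phiRatio n θ k :=
  ordinaryHypergeometricCoefficient_succ _ _ _ k

theorem eventually_abs_phiRatio_le (hn : 2 ≤ n) (hθ : -(1 / 2 : ℝ) < θ) :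
    ∀ᶠ k : ℕ in atTop, |phiRatio n θ k| ≤ 1 - (θ + 3 / 2) / (k + 1) := by
  have hn' : (2 : ℝ) ≤ n := by exact_mod_cast hn
  have hθ' : 0 < θ + 1 / 2 := by linarith
  filter_upwards [tendsto_natCast_atTop_atTop.eventually_ge_atTop |θ|,
    (tendsto_natCast_atTop_atTop.const_mul_atTop hθ').eventually_ge_atTop
      ((θ + 1 / 2) * (n / 2) - θ * (n / 2 - 1 - θ))] with k hkθ hk
  have hθk := le_abs_self θ
  rw [phiRatio, abs_of_nonneg (by apply div_nonneg <;> apply mul_nonneg <;> linarith),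
    div_le_iff₀ (by positivity)]
  have hk1 : (0 : ℝ) < k + 1 := by positivity
  have : (1 - (θ + 3 / 2) / (k + 1)) * ((n / 2 + k) * (k + 1)) =
      (n / 2 + k) * (k - θ - 1 / 2) := by
    field_simp; ring
  rw [this]
  -- the difference of the two sides is `(θ + 1/2) k - (θ + 1/2) n/2 + θ (n/2 - 1 - θ)`
  nlinarith

theorem summable_abs_phiCoeff (hn : 2 ≤ n) (hθ : -(1 / 2 : ℝ) < θ) :
    Summable fun k => |phiCoeff n θ k| := by
  refine summable_of_eventually_le_one_sub_div_mul (s := θ + 3 / 2) (by linarith)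
    (fun k => abs_nonneg _) ?_
  filter_upwards [eventually_abs_phiRatio_le hn hθ] with k hk
  rw [phiCoeff_succ, abs_mul, mul_comm]
  exact mul_le_mul_of_nonneg_right hk (abs_nonneg _)

theorem phiCoeff_pos (hn : 2 ≤ n) (hθ : θ ≤ -(1 / 2 : ℝ)) (k : ℕ) : 0 < phiCoeff n θ k := by
  have hn' : (2 : ℝ) ≤ n := by exact_mod_cast hn
  induction k with
  | zero => simp
  | succ k ih =>
    rw [phiCoeff_succ, phiRatio]
    have hk : (0 : ℝ) ≤ k := k.cast_nonneg
    refine mul_pos ih (div_pos (mul_pos ?_ ?_) (mul_pos ?_ ?_)) <;> linarith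

theorem not_summable_phiCoeff (hn : 2 ≤ n) (hθ : θ ≤ -(1 / 2 : ℝ)) :
    ¬ Summable (phiCoeff n θ) := by
  have hn' : (2 : ℝ) ≤ n := by exact_mod_cast hn
  refine not_summable_of_mul_le_succ_mul (phiCoeff_pos hn hθ 1) fun k => ?_
  have hk : (0 : ℝ) ≤ k := k.cast_nonneg
  have hratio : (k : ℝ) ≤ (k + 1) * phiRatio n θ k := by
    rw [phiRatio, mul_div_assoc', le_div_iff₀ (by positivity)]
    nlinarith [mul_nonneg (by linarith : (0 : ℝ) ≤ -1 - 2 * θ) hk,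
      mul_nonneg (by linarith : (0 : ℝ) ≤ -θ) (by linarith : (0 : ℝ) ≤ n / 2 - 1 - θ)]
  rw [phiCoeff_succ]
  nlinarith [mul_le_mul_of_nonneg_right hratio (phiCoeff_pos hn hθ k).le]

theorem summable_phiCoeff_mul_pow (hn : 2 ≤ n) (hθ : θ ≤ -(1 / 2 : ℝ)) {t : ℝ}
    (ht : |t| < 1) :
    Summable fun k => phiCoeff n θ k * t ^ k := by
  have hn' : (2 : ℝ) ≤ n := by exact_mod_cast hn
  have hradius := ordinaryHypergeometricSeries_radius_eq_one (𝔸 := ℝ) (-θ) ((n : ℝ) / 2 - 1 - θ)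
    ((n : ℝ) / 2) fun k => by
      have hk : (0 : ℝ) ≤ k := k.cast_nonneg
      refine ⟨?_, ?_, ?_⟩ <;> intro h <;> linarith
  have hsum := FormalMultilinearSeries.summable_norm_apply _ (x := t) (by
    rwa [hradius, Metric.mem_eball, edist_zero_right, ← ofReal_norm, ENNReal.ofReal_lt_one])
  simp only [ordinaryHypergeometricSeries_apply_eq, smul_eq_mul] at hsum
  exact hsum.of_norm
end

/-- `Φ_θ` is bounded on the unit ball iff `θ > -1/2`. -/
theorem stmt11 (n : ℕ) (hn : 2 ≤ n) (θ : ℝ) :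
    (∃ C : ℝ, ∀ x ∈ unitBall n, |Phi n θ x| ≤ C) ↔ -(1 / 2 : ℝ) < θ := by
  constructor
  · rintro ⟨C, hC⟩
    by_contra! hθ
    refine not_summable_phiCoeff hn hθ (summable_of_tsum_mul_pow_le (C := C)
      (fun k => (phiCoeff_pos hn hθ k).le)
      (fun t ht => summable_phiCoeff_mul_pow hn hθ (by rw [abs_of_nonneg ht.1]; exact ht.2))
      fun t ht => ?_)
    have : Nonempty (Fin n) := ⟨⟨0, by omega⟩⟩
    obtain ⟨x, hx⟩ := exists_norm_eq (E n) (Real.sqrt_nonneg t)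
    have hxB : x ∈ unitBall n := by
      rw [unitBall, mem_ball_zero_iff, hx, Real.sqrt_lt' one_pos, one_pow]; exact ht.2
    simpa [Phi_eq_tsum, hx, Real.sq_sqrt ht.1] using (le_abs_self _).trans (hC x hxB)
  · intro hθ
    refine ⟨∑' k, |phiCoeff n θ k|, fun x hx => ?_⟩
    rw [Phi_eq_tsum]
    refine abs_tsum_mul_pow_le_tsum_abs (summable_abs_phiCoeff hn hθ) ?_
    rw [unitBall, mem_ball_zero_iff] at hx
    rw [abs_of_nonneg (by positivity)]
    exact pow_le_one₀ (norm_nonneg x) hx.le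
end
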